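/- arXiv:1808.09908 — 7 statements merged into one kernel-verified Lean document; each statement's English description precedes it below -/
import Mathlib

section
/- Let H be a d-uniform hypergraph with d ≥ 2. Then every infection set for H is a hypergraph zero forcing set for H, and consequently Z₀(H) ≤ I(H). -/
/-! Common definitions: hypermatrices, hypergraphs, zero forcing, infection,
power domination zero forcing. -/

/-- A `d`-hypermatrix of dimension `n` over `F` is symmetric if its entries are
invariant under permutations of the indices. -/
def HMSymmetric {F : Type*} {n d : ℕ} (A : (Fin d → Fin n) → F) : Prop :=
  ∀ (i : Fin d → Fin n) (π : Equiv.Perm (Fin d)), A (i ∘ π) = A i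

/-- The space of null vectors of a `d`-hypermatrix: `x` is a null vector if
`∑ j, a_{i₁ ⋯ i_{d-1} j} x_j = 0` for every choice of indices `i₁, …, i_{d-1}`
(the last index is summed against `x`). -/
def nullSpace {F : Type*} [Field F] {n d : ℕ} (A : (Fin d → Fin n) → F) :
    Submodule F (Fin n → F) where
  carrier := {x | ∀ i : Fin d → Fin n,
    ∑ j : Fin n, A (fun k => if (k : ℕ) = d - 1 then j else i k) * x j = 0}
  add_mem' := by
    intro a b ha hb i
    simp only [Set.mem_setOf_eq] at ha hb
    simp only [Set.mem_setOf_eq, Pi.add_apply, mul_add, Finset.sum_add_distrib, ha i, hb i,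
      add_zero]
  zero_mem' := by
    intro i
    simp
  smul_mem' := by
    intro c x hx i
    simp only [Set.mem_setOf_eq] at hx
    simp only [Set.mem_setOf_eq, Pi.smul_apply, smul_eq_mul]
    have h : ∑ j : Fin n, A (fun k => if (k : ℕ) = d - 1 then j else i k) * (c * x j)
        = c * ∑ j : Fin n, A (fun k => if (k : ℕ) = d - 1 then j else i k) * x j := by
      rw [Finset.mul_sum]
      exact Finset.sum_congr rfl (fun j _ => by ring)
    rw [h, hx i, mul_zero]

/-- The nullity of a hypermatrix is the dimension of its space of null vectors. -/
noncomputable def hmNullity (F : Type*) [Field F] {n d : ℕ}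
    (A : (Fin d → Fin n) → F) : ℕ :=
  Module.finrank F (nullSpace A)

/-- A hypergraph on vertex type `V`: a set of hyperedges, each a finite set of
vertices. -/
structure HGraph (V : Type*) where
  edges : Set (Finset V)

/-- A hypergraph is `d`-uniform if every edge has exactly `d` vertices. -/
def HGraph.IsUniform {V : Type*} (H : HGraph V) (d : ℕ) : Prop :=
  ∀ e ∈ H.edges, e.card = d

/-- A hypercubical `d`-hypermatrix is graphical if it is symmetric and the entries
indexed by non-distinct indices vanish. -/
def Graphical {F : Type*} [Field F] {n d : ℕ} (A : (Fin d → Fin n) → F) : Prop :=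
  HMSymmetric A ∧ ∀ i : Fin d → Fin n, ¬ Function.Injective i → A i = 0

/-- The hypergraph of a graphical `d`-hypermatrix: edges are the (distinct) index
sets of nonzero entries. -/
def hypergraphOf {F : Type*} [Field F] {n d : ℕ} (A : (Fin d → Fin n) → F) :
    HGraph (Fin n) :=
  ⟨{e | ∃ i : Fin d → Fin n, Function.Injective i ∧ Finset.image i Finset.univ = e ∧ A i ≠ 0}⟩

/-- `A ∈ S(H)`: `A` is graphical and its hypergraph is `H`. -/
def InSFam {F : Type*} [Field F] {n d : ℕ} (H : HGraph (Fin n))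
    (A : (Fin d → Fin n) → F) : Prop :=
  Graphical A ∧ hypergraphOf A = H

/-- The maximum nullity `M(H)` of a `d`-uniform hypergraph `H` over the field `F`. -/
noncomputable def maxNullity (F : Type*) [Field F] {n : ℕ} (d : ℕ)
    (H : HGraph (Fin n)) : ℕ :=
  sSup {k | ∃ A : (Fin d → Fin n) → F, InSFam H A ∧ hmNullity F A = k}

/-- One application of the hypergraph color change rule: a set `S` of `d-1`
distinct vertices forces the white vertex `w` (i.e. `S ∪ {w}` is an edge and
`S ∪ {u}` being an edge for a white `u` implies `u = w`), turning the blue set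
`B` into `B'`. -/
def ZFStep {V : Type*} [DecidableEq V] (H : HGraph V) (d : ℕ) (B B' : Set V) : Prop :=
  ∃ (S : Finset V) (w : V), S.card = d - 1 ∧ w ∉ S ∧ w ∉ B ∧
    insert w S ∈ H.edges ∧
    (∀ u : V, u ∉ B → insert u S ∈ H.edges → u = w) ∧
    B' = insert w B

/-- `B` is a hypergraph zero forcing set: starting from blue set `B`, repeated
applications of the hypergraph color change rule color every vertex blue. -/
def IsZFSet {V : Type*} [DecidableEq V] (H : HGraph V) (d : ℕ) (B : Set V) : Prop :=
  Relation.ReflTransGen (ZFStep H d) B Set.univ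

/-- The hypergraph zero forcing number `Z₀(H)`: the minimum cardinality of a
hypergraph zero forcing set. -/
noncomputable def Z0 {V : Type*} [DecidableEq V] (H : HGraph V) (d : ℕ) : ℕ :=
  sInf {k | ∃ B : Finset V, B.card = k ∧ IsZFSet H d (↑B : Set V)}

/-- One application of the infection rule: a nonempty set `S` of infected vertices
contained in an edge `e`, such that for every uninfected `u ∉ e` the set `S ∪ {u}`
is contained in no edge, infects all of `e`. -/
def InfStep {V : Type*} [DecidableEq V] (H : HGraph V) (B B' : Set V) : Prop :=
  ∃ (S e : Finset V), e ∈ H.edges ∧ S.Nonempty ∧ (↑S : Set V) ⊆ B ∧ S ⊆ e ∧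
    (∀ u : V, u ∉ B → u ∉ e → ∀ e' ∈ H.edges, ¬ insert u S ⊆ e') ∧
    B' = B ∪ (↑e : Set V)

/-- `B` is an infection set: starting from `B` infected, repeated applications of
the infection rule infect every vertex. -/
def IsInfectionSet {V : Type*} [DecidableEq V] (H : HGraph V) (B : Set V) : Prop :=
  Relation.ReflTransGen (InfStep H) B Set.univ

/-- The infection number `I(H)`. -/
noncomputable def infNum {V : Type*} [DecidableEq V] (H : HGraph V) : ℕ :=
  sInf {k | ∃ B : Finset V, B.card = k ∧ IsInfectionSet H (↑B : Set V)}

/-- `w` is a neighbor of `v` if some edge contains both (and `v ≠ w`). -/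
def HGraph.Neighbor {V : Type*} (H : HGraph V) (v w : V) : Prop :=
  v ≠ w ∧ ∃ e ∈ H.edges, v ∈ e ∧ w ∈ e

/-- One application of the power domination color change rule: if all white
neighbors of a blue vertex `v` lie in a single edge containing `v`, they all
become blue. -/
def PDStep {V : Type*} (H : HGraph V) (B B' : Set V) : Prop :=
  ∃ v ∈ B, ∃ e ∈ H.edges, v ∈ e ∧
    (∀ w : V, H.Neighbor v w → w ∉ B → w ∈ e) ∧
    B' = B ∪ {w | H.Neighbor v w ∧ w ∉ B}

/-- `B` is a power domination zero forcing set. -/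
def IsPDZFSet {V : Type*} (H : HGraph V) (B : Set V) : Prop :=
  Relation.ReflTransGen (PDStep H) B Set.univ

/-- The power domination zero forcing number `Zpd(H)`. -/
noncomputable def Zpd {V : Type*} (H : HGraph V) : ℕ :=
  sInf {k | ∃ B : Finset V, B.card = k ∧ IsPDZFSet H (↑B : Set V)}

/-- The complete `d`-uniform hypergraph on `Fin n`: all `d`-element subsets. -/
def completeHG (n d : ℕ) : HGraph (Fin n) :=
  ⟨{e : Finset (Fin n) | e.card = d}⟩

/-- Two vertices are linked if some edge contains both. -/
def HGraph.Linked {V : Type*} (H : HGraph V) (a b : V) : Prop :=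
  ∃ e ∈ H.edges, a ∈ e ∧ b ∈ e

/-- A hypergraph is connected if any two vertices are joined by a path. -/
def HGraph.Connected {V : Type*} (H : HGraph V) : Prop :=
  ∀ u v : V, Relation.ReflTransGen H.Linked u v

/-- The connected component of a vertex `v`. -/
def componentSet {V : Type*} (H : HGraph V) (v : V) : Set V :=
  {u | Relation.ReflTransGen H.Linked v u}

/-- A vertex is isolated if it belongs to no edge. -/
def HGraph.IsIsolated {V : Type*} (H : HGraph V) (v : V) : Prop :=
  ∀ e ∈ H.edges, v ∉ e

/-- An interval `d`-uniform hypergraph on `Fin n` (vertices numbered `0,…,n-1`):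
every edge consists of `d` consecutive vertices `{ℓ, ℓ+1, …, ℓ+d-1}`. -/
def IsIntervalHG {n : ℕ} (H : HGraph (Fin n)) (d : ℕ) : Prop :=
  ∀ e ∈ H.edges, ∃ ℓ : ℕ, e.image Fin.val = Finset.Ico ℓ (ℓ + d)

/-- The edge set of the special interval hypergraph `SI(d,s)` on vertices
`0,…,sd` (0-indexed): left endpoints `(i-1)d` and `(i-1)d+1` for `i = 1,…,s`. -/
def siEdges (n d s : ℕ) : Set (Finset (Fin n)) :=
  {e | ∃ i < s, e.image Fin.val = Finset.Ico (i * d) (i * d + d) ∨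
       e.image Fin.val = Finset.Ico (i * d + 1) (i * d + 1 + d)}

/-- The component of `H` induced on `U` is (a copy of) the special interval
hypergraph `SI(d,s)` for some `s ≥ 1`: the vertices of `U` are `sd+1` consecutive
integers starting at `a`, and the edges of `H` contained in `U` are exactly the
shifted special-interval edges. -/
def IsSIComponent {n : ℕ} (H : HGraph (Fin n)) (d : ℕ) (U : Set (Fin n)) : Prop :=
  ∃ a s : ℕ, 1 ≤ s ∧ Fin.val '' U = Set.Ico a (a + s * d + 1) ∧
    ∀ e : Finset (Fin n),
      (e ∈ H.edges ∧ (↑e : Set (Fin n)) ⊆ U) ↔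
      ∃ i < s, e.image Fin.val = Finset.Ico (a + i * d) (a + i * d + d) ∨
               e.image Fin.val = Finset.Ico (a + i * d + 1) (a + i * d + 1 + d)

/-- The set of values `{ℓ, ℓ+1, …, ℓ+d-1}` taken modulo `n` (a circular arc). -/
def arcEdge (n d ℓ : ℕ) : Finset ℕ :=
  (Finset.range d).image (fun k => (ℓ + k) % n)

/-- The edge set of the special circular-arc hypergraph `SCA(d,s)` on `n = sd`
vertices (0-indexed): first endpoints `(i-1)d` and `(i-1)d+1` for `i = 1,…,s`. -/
def scaEdges (n d s : ℕ) : Set (Finset (Fin n)) :=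
  {e | ∃ i < s, e.image Fin.val = arcEdge n d (i * d) ∨
       e.image Fin.val = arcEdge n d (i * d + 1)}

/-- The `t`-tight circular-arc `d`-hypergraph on `d+1` vertices: edges are the
arcs of length `d` with first endpoints `(i-1)(d-t)` (0-indexed) for
`i = 1, …, (d+1)/(d-t)`. -/
def tightCA (d t : ℕ) : HGraph (Fin (d + 1)) :=
  ⟨{e | ∃ i < (d + 1) / (d - t), e.image Fin.val = arcEdge (d + 1) d (i * (d - t))}⟩

/-- Edge deletion `H - e`. -/
def deleteEdge {V : Type*} (H : HGraph V) (e : Finset V) : HGraph V :=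
  ⟨H.edges \ {e}⟩

/-- Vertex deletion `H - v`: the vertex set becomes `{u // u ≠ v}` and the edges
are the edges of `H` not containing `v`. -/
def deleteVertex {V : Type*} [DecidableEq V] (H : HGraph V) (v : V) : HGraph {u : V // u ≠ v} :=
  ⟨{e | e.image Subtype.val ∈ H.edges}⟩

/-- The Cartesian product of hypergraphs. -/
def cartProd {V V' : Type*} [DecidableEq V] [DecidableEq V']
    (H : HGraph V) (H' : HGraph V') : HGraph (V × V') :=
  ⟨{E | (∃ e ∈ H.edges, ∃ v' : V', E = e ×ˢ ({v'} : Finset V')) ∨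
        (∃ v : V, ∃ e' ∈ H'.edges, E = ({v} : Finset V) ×ˢ e')}⟩

open Classical in
lemma infstep_to_zf {V : Type*} [DecidableEq V] {d : ℕ} (hd : 2 ≤ d)
    (H : HGraph V) (hH : H.IsUniform d) {B B' : Set V}
    (h : InfStep H B B') : Relation.ReflTransGen (ZFStep H d) B B' := by
  obtain ⟨S, e, he, hSne, hSB, hSe, hcond, rfl⟩ := h
  suffices h : ∀ k (C : Set V), B ⊆ C →
      (e.filter (fun v => v ∉ C)).card ≤ k →
      Relation.ReflTransGen (ZFStep H d) C (C ∪ ↑e) by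
    exact h e.card B subset_rfl (Finset.card_filter_le _ _)
  intro k
  induction k with
  | zero =>
    intro C hBC hcard
    have hsub : (↑e : Set V) ⊆ C := by
      intro v hv
      by_contra hvC
      have : v ∈ e.filter (fun v => v ∉ C) := Finset.mem_filter.mpr ⟨hv, hvC⟩
      have := Finset.card_pos.mpr ⟨v, this⟩
      omega
    rw [Set.union_eq_self_of_subset_right hsub]
  | succ k ih =>
    intro C hBC hcard
    by_cases hsub : (↑e : Set V) ⊆ C
    · rw [Set.union_eq_self_of_subset_right hsub]
    · obtain ⟨w, hwe, hwC⟩ : ∃ w ∈ e, w ∉ C := by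
        simp only [Set.subset_def, Finset.mem_coe, not_forall] at hsub
        obtain ⟨w, hw1, hw2⟩ := hsub
        exact ⟨w, hw1, hw2⟩
      have hwS : w ∉ S := fun hw => hwC (hBC (hSB hw))
      have hST : S ⊆ e.erase w := fun v hv =>
        Finset.mem_erase.mpr ⟨fun hvw => hwS (hvw ▸ hv), hSe hv⟩
      have hcard_e : e.card = d := hH e he
      have hstep : ZFStep H d C (insert w C) := by
        refine ⟨e.erase w, w, ?_, Finset.notMem_erase _ _, hwC, ?_, ?_, rfl⟩
        · rw [Finset.card_erase_of_mem hwe, hcard_e]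
        · rwa [Finset.insert_erase hwe]
        · intro u huC hue
          by_contra huw
          have hue' : u ∉ e := by
            intro hueIn
            have huT : u ∈ e.erase w := Finset.mem_erase.mpr ⟨huw, hueIn⟩
            rw [Finset.insert_eq_self.mpr huT] at hue
            have := hH _ hue
            rw [Finset.card_erase_of_mem hwe, hcard_e] at this
            omega
          exact hcond u (fun h => huC (hBC h)) hue' _ hue
            (Finset.insert_subset_insert _ hST)
      have hdec : (e.filter (fun v => v ∉ insert w C)).card ≤ k := by
        have hsubset : e.filter (fun v => v ∉ insert w C) ⊆
            (e.filter (fun v => v ∉ C)).erase w := by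
          intro v hv
          simp only [Finset.mem_filter, Set.mem_insert_iff, not_or] at hv
          exact Finset.mem_erase.mpr ⟨hv.2.1, Finset.mem_filter.mpr ⟨hv.1, hv.2.2⟩⟩
        have := Finset.card_le_card hsubset
        have hwmem : w ∈ e.filter (fun v => v ∉ C) := Finset.mem_filter.mpr ⟨hwe, hwC⟩
        rw [Finset.card_erase_of_mem hwmem] at this
        omega
      have htail := ih (insert w C) (hBC.trans (Set.subset_insert _ _)) (by convert hdec using 2; congr!)
      have heq : insert w C ∪ ↑e = C ∪ ↑e := by
        rw [Set.insert_union]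
        exact Set.insert_eq_of_mem (Set.mem_union_right _ hwe)
      exact Relation.ReflTransGen.head hstep (heq ▸ htail)

theorem stmt3 {V : Type*} [DecidableEq V] [Fintype V] {d : ℕ} (hd : 2 ≤ d)
    (H : HGraph V) (hH : H.IsUniform d) :
    (∀ B : Set V, IsInfectionSet H B → IsZFSet H d B) ∧ Z0 H d ≤ infNum H := by
  have part1 : ∀ B : Set V, IsInfectionSet H B → IsZFSet H d B := by
    intro B hB
    have := Relation.ReflTransGen.mono (fun x y h => infstep_to_zf hd H hH h) _ _ hB
    rwa [Relation.reflTransGen_idem] at this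
  refine ⟨part1, ?_⟩
  have hne : {k | ∃ B : Finset V, B.card = k ∧ IsInfectionSet H (↑B : Set V)}.Nonempty := by
    refine ⟨(Finset.univ : Finset V).card, Finset.univ, rfl, ?_⟩
    rw [Finset.coe_univ]
    exact Relation.ReflTransGen.refl
  obtain ⟨B, hcard, hinf⟩ := Nat.sInf_mem hne
  exact Nat.sInf_le ⟨B, hcard, part1 _ hinf⟩
end

section
/- Let H be a hypergraph (not necessarily uniform). Then every power domination zero forcing set for H is an infection set for H, and consequently I(H) ≤ Zpd(H). -/
theorem stmt4 {V : Type*} [DecidableEq V] [Fintype V] (H : HGraph V) :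
    (∀ B : Set V, IsPDZFSet H B → IsInfectionSet H B) ∧ infNum H ≤ Zpd H := by
  have main : ∀ B : Set V, Relation.ReflTransGen (PDStep H) B Set.univ →
      ∀ C : Set V, B ⊆ C → Relation.ReflTransGen (InfStep H) C Set.univ := by
    intro B hB
    induction hB using Relation.ReflTransGen.head_induction_on with
    | refl =>
      intro C hC
      have : C = Set.univ := Set.eq_univ_of_univ_subset hC
      subst this; exact Relation.ReflTransGen.refl
    | head hstep _ ih =>
      intro C hC
      rename_i B B' _
      obtain ⟨v, hv, e, he, hve, hnb, hB'⟩ := hstep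
      refine Relation.ReflTransGen.head
        (b := C ∪ (↑e : Set V)) ⟨{v}, e, he, Finset.singleton_nonempty v, ?_,
          Finset.singleton_subset_iff.2 hve, ?_, rfl⟩ (ih (C ∪ ↑e) ?_)
      · simpa using hC hv
      · intro u huC hue e' he' hsub
        have hu' : u ∈ e' := hsub (Finset.mem_insert_self u _)
        have hv' : v ∈ e' := hsub (Finset.mem_insert_of_mem (Finset.mem_singleton_self v))
        have huB : u ∉ B := fun h => huC (hC h)
        have hne : v ≠ u := fun h => huC (h ▸ hC hv)
        exact hue (hnb u ⟨hne, e', he', hv', hu'⟩ huB)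
      · rw [hB']
        rintro x (hx | hx)
        · exact Or.inl (hC hx)
        · exact Or.inr (hnb x hx.1 hx.2)
  refine ⟨fun B hB => main B hB B subset_rfl, ?_⟩
  have hne : {k | ∃ B : Finset V, B.card = k ∧ IsPDZFSet H (↑B : Set V)}.Nonempty :=
    ⟨_, Finset.univ, rfl, by rw [Finset.coe_univ]; exact Relation.ReflTransGen.refl⟩
  obtain ⟨B, hcard, hpd⟩ := Nat.sInf_mem hne
  exact Nat.sInf_le ⟨B, hcard, main _ hpd _ subset_rfl⟩
end

section
/- Let d ≥ 2 and let H be a d-uniform hypergraph with no isolated vertices such that |e ∩ e'| ≤ d − 2 for every pair of distinct edges e and e' of H. Then M(H) = Z₀(H) = 0; in particular, the empty set is a hypergraph zero forcing set for H. -/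
section Aux

variable {F : Type*} [Field F] {n d : ℕ}

/-- A symmetric hypermatrix takes equal values on injective tuples with the same range. -/
lemma hm_sym_const {A : (Fin d → Fin n) → F} (hs : HMSymmetric A)
    {i i' : Fin d → Fin n} (hi : Function.Injective i) (hi' : Function.Injective i')
    (h : Set.range i = Set.range i') : A i = A i' := by
  set e1 := Equiv.ofInjective i hi
  set e2 := Equiv.ofInjective i' hi'
  let π : Equiv.Perm (Fin d) := e2.trans ((Equiv.setCongr h.symm).trans e1.symm)
  have hcomp : i ∘ π = i' := by
    funext j
    simp only [π, Function.comp_apply, Equiv.trans_apply, Equiv.setCongr_apply]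
    exact Equiv.apply_ofInjective_symm hi _
  calc A i = A (i ∘ π) := (hs i π).symm
    _ = A i' := by rw [hcomp]

/-- In a uniform hypergraph with small pairwise edge intersections, from any blue set
we can reach the all-blue state. -/
lemma zf_reach (hd : 2 ≤ d) (H : HGraph (Fin n)) (hH : H.IsUniform d)
    (hiso : ∀ v : Fin n, ¬ H.IsIsolated v)
    (hint : ∀ e ∈ H.edges, ∀ e' ∈ H.edges, e ≠ e' → (e ∩ e').card ≤ d - 2)
    (B : Set (Fin n)) : Relation.ReflTransGen (ZFStep H d) B Set.univ := by
  have key : ∀ m : ℕ, ∀ B : Set (Fin n), Bᶜ.ncard = m →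
      Relation.ReflTransGen (ZFStep H d) B Set.univ := by
    intro m
    induction m using Nat.strong_induction_on with
    | _ m ih =>
      intro B hB
      by_cases hBu : B = Set.univ
      · exact hBu ▸ Relation.ReflTransGen.refl
      · have hex : ∃ v : Fin n, v ∉ B := by
          by_contra hc
          push_neg at hc
          exact hBu (Set.eq_univ_of_forall hc)
        obtain ⟨v, hv⟩ := hex
        have hiso' := hiso v
        unfold HGraph.IsIsolated at hiso'
        push_neg at hiso'
        obtain ⟨e, he, hve⟩ := hiso'
        have hcard : e.card = d := hH e he
        have hstep : ZFStep H d B (insert v B) := by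
          refine ⟨e.erase v, v, ?_, Finset.notMem_erase v e, hv, ?_, ?_, rfl⟩
          · rw [Finset.card_erase_of_mem hve, hcard]
          · rwa [Finset.insert_erase hve]
          · intro u _ hu
            by_cases huS : u ∈ e.erase v
            · exfalso
              rw [Finset.insert_eq_self.mpr huS] at hu
              have := hH _ hu
              rw [Finset.card_erase_of_mem hve, hcard] at this
              omega
            · -- insert u (e.erase v) is an edge containing e.erase v
              have hsub : e.erase v ⊆ e ∩ insert u (e.erase v) := by
                intro x hx
                exact Finset.mem_inter.mpr ⟨Finset.mem_of_mem_erase hx,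
                  Finset.mem_insert_of_mem hx⟩
              have hcard' : d - 1 ≤ (e ∩ insert u (e.erase v)).card := by
                have := Finset.card_le_card hsub
                rwa [Finset.card_erase_of_mem hve, hcard] at this
              by_cases heq : e = insert u (e.erase v)
              · have hue : u ∈ e := heq ▸ Finset.mem_insert_self u _
                by_contra hne
                exact huS (Finset.mem_erase.mpr ⟨hne, hue⟩)
              · have := hint e he _ hu heq
                omega
        have hlt : (insert v B)ᶜ.ncard < m := by
          have hc : (insert v B)ᶜ = Bᶜ \ {v} := by
            ext z
            simp only [Set.mem_compl_iff, Set.mem_insert_iff, Set.mem_diff,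
              Set.mem_singleton_iff]
            tauto
          rw [hc, ← hB]
          exact Set.ncard_diff_singleton_lt_of_mem hv (Set.toFinite _)
        exact Relation.ReflTransGen.head hstep (ih _ hlt _ rfl)
  exact key _ B rfl

/-- The null space of a graphical hypermatrix in `S(H)` is trivial. -/
lemma null_trivial (hd : 2 ≤ d) (H : HGraph (Fin n)) (hH : H.IsUniform d)
    (hiso : ∀ v : Fin n, ¬ H.IsIsolated v)
    (hint : ∀ e ∈ H.edges, ∀ e' ∈ H.edges, e ≠ e' → (e ∩ e').card ≤ d - 2)
    {A : (Fin d → Fin n) → F} (hA : InSFam H A) : nullSpace A = ⊥ := by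
  obtain ⟨⟨hsym, hgr⟩, hHG⟩ := hA
  have hedges : (hypergraphOf A).edges = H.edges := by rw [hHG]
  rw [eq_bot_iff]
  intro x hx
  have hx' : ∀ i : Fin d → Fin n,
      ∑ j : Fin n, A (fun k => if (k : ℕ) = d - 1 then j else i k) * x j = 0 := hx
  simp only [Submodule.mem_bot]
  funext v
  show x v = (0 : Fin n → F) v
  simp only [Pi.zero_apply]
  -- v lies in some edge e
  have hiso' := hiso v
  unfold HGraph.IsIsolated at hiso'
  push_neg at hiso'
  obtain ⟨e, he, hve⟩ := hiso'
  have hcard : e.card = d := hH e he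
  -- build f : Fin d → Fin n injective, range e, with f lastI = v
  have hd1 : d - 1 < d := by omega
  set lastI : Fin d := ⟨d - 1, hd1⟩ with hlastI
  set σ : e ≃ Fin d := e.equivFinOfCardEq hcard with hσ
  set f : Fin d → Fin n :=
    fun k => (σ.symm (Equiv.swap (σ ⟨v, hve⟩) lastI k) : Fin n) with hf
  have hfinj : Function.Injective f := by
    intro a b hab
    have := σ.symm.injective (Subtype.ext hab)
    exact (Equiv.swap _ _).injective this
  have hfmem : ∀ k, f k ∈ e := fun k => (σ.symm _).2
  have hflast : f lastI = v := by
    simp only [hf, Equiv.swap_apply_right, Equiv.symm_apply_apply]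
  have himg : Finset.univ.image f = e := by
    apply Finset.eq_of_subset_of_card_le
    · intro z hz
      obtain ⟨k, _, rfl⟩ := Finset.mem_image.mp hz
      exact hfmem k
    · rw [hcard, Finset.card_image_of_injective _ hfinj, Finset.card_univ,
        Fintype.card_fin]
  have hfrange : Set.range f = ↑e := by
    rw [← himg]
    ext z
    simp [Finset.mem_image]
  -- the "g j" tuple
  set g : Fin n → (Fin d → Fin n) :=
    fun j => (fun k => if (k : ℕ) = d - 1 then j else f k) with hg
  have hgeq : ∀ j k, g j k = if k = lastI then j else f k := by
    intro j k
    simp only [hg]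
    congr 1
    simp only [eq_iff_iff]
    constructor
    · intro h; exact Fin.ext h
    · intro h; rw [h]
  have hgv : g v = f := by
    funext k
    rw [hgeq]
    split
    · rename_i h; rw [h, hflast]
    · rfl
  -- A f ≠ 0
  have hAf : A f ≠ 0 := by
    have he' : e ∈ (hypergraphOf A).edges := hedges ▸ he
    obtain ⟨i', hi'inj, hi'img, hi'ne⟩ := he'
    have hrange' : Set.range i' = ↑e := by
      rw [← hi'img]
      ext z
      simp [Finset.mem_image, Set.mem_range]
    have : A f = A i' := hm_sym_const hsym hfinj hi'inj (hfrange.trans hrange'.symm)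
    rw [this]; exact hi'ne
  -- terms with j ≠ v vanish
  have hterm : ∀ j : Fin n, j ≠ v → A (g j) * x j = 0 := by
    intro j hj
    have : A (g j) = 0 := by
      by_contra hA0
      by_cases hginj : Function.Injective (g j)
      · -- image of g j is an edge e'
        have he' : Finset.image (g j) Finset.univ ∈ H.edges := by
          rw [← hedges]
          exact ⟨g j, hginj, rfl, hA0⟩
        set e' := Finset.image (g j) Finset.univ with he'def
        have herase : e.erase v ⊆ e ∩ e' := by
          intro u hu
          obtain ⟨hune, hue⟩ := Finset.mem_erase.mp hu
          refine Finset.mem_inter.mpr ⟨hue, ?_⟩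
          obtain ⟨k, hk⟩ : ∃ k, f k = u := by
            have : u ∈ Set.range f := hfrange ▸ (Finset.mem_coe.mpr hue)
            exact this
          have hkl : k ≠ lastI := by
            intro h; rw [h, hflast] at hk; exact hune hk.symm
          refine Finset.mem_image.mpr ⟨k, Finset.mem_univ k, ?_⟩
          rw [hgeq, if_neg hkl, hk]
        have hcard2 : d - 1 ≤ (e ∩ e').card := by
          have := Finset.card_le_card herase
          rwa [Finset.card_erase_of_mem hve, hcard] at this
        have heq : e = e' := by
          by_contra hne
          have := hint e he e' he' hne
          omega
        -- then j = g j lastI ∈ e' = e, j ≠ v, so j ∈ e.erase v, contradiction with inj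
        have hje : j ∈ e := by
          rw [heq]
          refine Finset.mem_image.mpr ⟨lastI, Finset.mem_univ _, ?_⟩
          rw [hgeq, if_pos rfl]
        obtain ⟨k, hk⟩ : ∃ k, f k = j := by
          have : j ∈ Set.range f := hfrange ▸ (Finset.mem_coe.mpr hje)
          exact this
        have hkl : k ≠ lastI := by
          intro h; rw [h, hflast] at hk; exact hj hk.symm
        have : g j k = g j lastI := by
          rw [hgeq, hgeq, if_neg hkl, if_pos rfl, hk]
        exact hkl (hginj this)
      · exact hA0 (hgr _ hginj)
    rw [this, zero_mul]
  have hsum := hx' f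
  rw [Finset.sum_eq_single_of_mem v (Finset.mem_univ v)
    (fun j _ hj => hterm j hj)] at hsum
  have : A (g v) * x v = 0 := hsum
  rw [hgv] at this
  exact (mul_eq_zero.mp this).resolve_left hAf

end Aux

theorem stmt7 (F : Type*) [Field F] {n d : ℕ} (hd : 2 ≤ d)
    (H : HGraph (Fin n)) (hH : H.IsUniform d)
    (hiso : ∀ v : Fin n, ¬ H.IsIsolated v)
    (hint : ∀ e ∈ H.edges, ∀ e' ∈ H.edges, e ≠ e' → (e ∩ e').card ≤ d - 2) :
    maxNullity F d H = 0 ∧ Z0 H d = 0 ∧ IsZFSet H d (∅ : Set (Fin n)) := by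
  have hzf : IsZFSet H d (∅ : Set (Fin n)) := zf_reach hd H hH hiso hint ∅
  refine ⟨?_, ?_, hzf⟩
  · -- maxNullity = 0
    have hsub : {k | ∃ A : (Fin d → Fin n) → F, InSFam H A ∧ hmNullity F A = k} ⊆ {0} := by
      rintro k ⟨A, hA, rfl⟩
      have h0 : nullSpace A = ⊥ := null_trivial hd H hH hiso hint hA
      rw [Set.mem_singleton_iff, hmNullity, h0]
      exact finrank_bot F _
    unfold maxNullity
    have hub : (0 : ℕ) ∈ upperBounds
        {k | ∃ A : (Fin d → Fin n) → F, InSFam H A ∧ hmNullity F A = k} := by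
      intro k hk
      have := hsub hk
      simp only [Set.mem_singleton_iff] at this
      omega
    exact Nat.le_zero.mp (csSup_le' hub)
  · -- Z0 = 0
    apply Nat.sInf_eq_zero.mpr
    left
    exact ⟨∅, Finset.card_empty, by simpa using hzf⟩
end

section
/- Let H be a circular-arc d-uniform hypergraph determined by n ≥ d + 2 and first endpoint set L(H) = {ℓ₁ < ⋯ < ℓ_m} with ℓ₁ = 1, ℓ_{i+1} ≤ ℓ_i + d − 1 for i = 1,…,m−1, and ℓ_m ≥ n − d + 2. Then any set of d consecutive vertices (in the cyclic order) is a hypergraph zero forcing set for H. -/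
/-! Auxiliary lemmas for Statement 13. -/

lemma arc_mem_iff {n d ℓ x : ℕ} : x ∈ arcEdge n d ℓ ↔ ∃ k, k < d ∧ (ℓ + k) % n = x := by
  simp [arcEdge, Finset.mem_image, Finset.mem_range]

lemma mod_add_cancel {n a k1 k2 : ℕ} (h : (a + k1) % n = (a + k2) % n)
    (h1 : k1 < n) (h2 : k2 < n) : k1 = k2 := by
  have h3 : k1 ≡ k2 [MOD n] := Nat.ModEq.add_left_cancel' a h
  rwa [Nat.ModEq, Nat.mod_eq_of_lt h1, Nat.mod_eq_of_lt h2] at h3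

lemma arc_card {n d ℓ : ℕ} (hdn : d ≤ n) (hn0 : 0 < n) : (arcEdge n d ℓ).card = d := by
  rw [arcEdge, Finset.card_image_of_injOn, Finset.card_range]
  intro x hx y hy hxy
  simp only [Finset.coe_range, Set.mem_Iio] at hx hy
  exact mod_add_cancel hxy (lt_of_lt_of_le hx hdn) (lt_of_lt_of_le hy hdn)

/-- Key combinatorial lemma: if an arc of length `d` starting at `a` minus its
`r`-th element is contained in the arc of length `d` starting at `b`, then
either `b = a`, or `r = d-1` and `b` is the arc one step counterclockwise. -/
lemma arc_subset_cases {n d : ℕ} (hd : 2 ≤ d) (hn : d + 2 ≤ n) {a b r : ℕ}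
    (ha : a < n) (hb : b < n) (hr1 : 1 ≤ r) (hr2 : r ≤ d - 1)
    (hsub : ∀ k, k < d → k ≠ r → (a + k) % n ∈ arcEdge n d b) :
    b = a ∨ (r = d - 1 ∧ b = (a + (n - 1)) % n) := by
  have hn0 : 0 < n := by omega
  set δ := if b ≤ a then a - b else a + n - b with hδdef
  have hδn : δ < n := by rw [hδdef]; split <;> omega
  have hδb : δ + b = a ∨ δ + b = a + n := by rw [hδdef]; split <;> omega
  have key : ∀ k, k < d → k ≠ r → (δ + k) % n ≤ d - 1 := by
    intro k hk hkr
    obtain ⟨k', hk', hk'eq⟩ := arc_mem_iff.mp (hsub k hk hkr)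
    have h2 : (δ + k + b) % n = (a + k) % n := by
      rcases hδb with h | h
      · rw [show δ + k + b = a + k by omega]
      · rw [show δ + k + b = (a + k) + n by omega, Nat.add_mod_right]
    have h3 : (δ + k) + b ≡ k' + b [MOD n] := by
      show ((δ + k) + b) % n = (k' + b) % n
      rw [h2, ← hk'eq, Nat.add_comm b k']
    have h4 := Nat.ModEq.add_right_cancel' b h3
    have h5 : (δ + k) % n = k' % n := h4
    rw [h5, Nat.mod_eq_of_lt (by omega : k' < n)]
    omega
  have hδd : δ ≤ d - 1 := by
    have h := key 0 (by omega) (by omega)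
    rwa [Nat.add_zero, Nat.mod_eq_of_lt hδn] at h
  rcases Nat.lt_or_ge δ 2 with hδ2 | hδ2
  · rcases Nat.lt_or_ge δ 1 with hδ1 | hδ1
    · -- δ = 0 : b = a
      left; omega
    · -- δ = 1 : r = d - 1 and b = a - 1 (mod n)
      have hδ : δ = 1 := by omega
      right
      have hrd : r = d - 1 := by
        by_contra hne
        have h := key (d - 1) (by omega) (Ne.symm hne)
        rw [show δ + (d - 1) = d by omega, Nat.mod_eq_of_lt (by omega : d < n)] at h
        omega
      refine ⟨hrd, ?_⟩
      rcases hδb with h | h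
      · rw [show a + (n - 1) = b + n by omega, Nat.add_mod_right, Nat.mod_eq_of_lt hb]
      · rw [show a + (n - 1) = b by omega, Nat.mod_eq_of_lt hb]
  · -- δ ≥ 2 : contradiction
    exfalso
    set k := if r = d - δ then d - δ + 1 else d - δ with hkdef
    have hk : k < d := by rw [hkdef]; split <;> omega
    have hkr : k ≠ r := by rw [hkdef]; split <;> omega
    have hval : δ + k = d ∨ δ + k = d + 1 := by rw [hkdef]; split <;> omega
    have h := key k hk hkr
    rcases hval with h' | h' <;>
      rw [h', Nat.mod_eq_of_lt (by omega)] at h <;> omega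

/-- The window lemma: every residue is reachable from some left endpoint by a
step of size between 1 and d-1. -/
lemma endpoint_window {n d m : ℕ} (hd : 2 ≤ d) (hn : d + 2 ≤ n) (hm : 1 ≤ m)
    (ℓ : ℕ → ℕ) (h0 : ℓ 0 = 0) (hltn : ∀ i < m, ℓ i < n)
    (hgap : ∀ i : ℕ, i + 1 < m → ℓ (i + 1) ≤ ℓ i + d - 1)
    (hlast : n - d + 1 ≤ ℓ (m - 1)) (a : ℕ) (ha : a < n) :
    ∃ i < m, ∃ r, 1 ≤ r ∧ r ≤ d - 1 ∧ (ℓ i + r) % n = a := by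
  have hlm : ℓ (m - 1) < n := hltn (m - 1) (by omega)
  rcases Nat.eq_zero_or_pos a with ha0 | ha0
  · refine ⟨m - 1, by omega, n - ℓ (m - 1), by omega, by omega, ?_⟩
    rw [show ℓ (m - 1) + (n - ℓ (m - 1)) = n by omega, Nat.mod_self, ha0]
  · set i := Nat.findGreatest (fun i => ℓ i < a) (m - 1) with hi
    have hP0 : ℓ 0 < a := by omega
    have him : i ≤ m - 1 := Nat.findGreatest_le (m - 1)
    have hPi : ℓ i < a := Nat.findGreatest_spec (P := fun i => ℓ i < a) (Nat.zero_le _) hP0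
    refine ⟨i, by omega, a - ℓ i, by omega, ?_, ?_⟩
    · rcases Nat.lt_or_ge i (m - 1) with hlt | hge
      · have hnext : ¬ (ℓ (i + 1) < a) :=
          Nat.findGreatest_is_greatest (P := fun i => ℓ i < a) (n := m - 1)
            (k := i + 1) (by omega) (by omega)
        have := hgap i (by omega)
        omega
      · have hieq : i = m - 1 := by omega
        rw [hieq] at hPi ⊢
        omega
    · rw [show ℓ i + (a - ℓ i) = a by omega, Nat.mod_eq_of_lt ha]

/-- The forcing step: from a blue arc of length `t` (with `d ≤ t < n`) starting
at `j`, the next vertex clockwise can be forced. -/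
lemma zf_arc_step {n d m : ℕ} (hd : 2 ≤ d) (hn : d + 2 ≤ n) (hm : 1 ≤ m)
    (ℓ : ℕ → ℕ) (h0 : ℓ 0 = 0) (hltn : ∀ i < m, ℓ i < n)
    (hgap : ∀ i : ℕ, i + 1 < m → ℓ (i + 1) ≤ ℓ i + d - 1)
    (hlast : n - d + 1 ≤ ℓ (m - 1))
    (H : HGraph (Fin n))
    (hedges : H.edges = {e : Finset (Fin n) | ∃ i < m, e.image Fin.val = arcEdge n d (ℓ i)})
    (j t : ℕ) (hdt : d ≤ t) (htn : t < n) :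
    ZFStep H d {v : Fin n | ∃ k < t, (v : ℕ) = (j + k) % n}
      {v : Fin n | ∃ k < t + 1, (v : ℕ) = (j + k) % n} := by
  have hn0 : 0 < n := by omega
  set B := {v : Fin n | ∃ k < t, (v : ℕ) = (j + k) % n} with hB
  obtain ⟨i, him, r, hr1, hr2, hir⟩ :=
    endpoint_window hd hn hm ℓ h0 hltn hgap hlast ((j + t) % n) (Nat.mod_lt _ hn0)
  set a := ℓ i with ha
  have han : a < n := hltn i him
  set f : ℕ → Fin n := fun k => ⟨(a + k) % n, Nat.mod_lt _ hn0⟩ with hf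
  have hfinj : ∀ k1, k1 < d → ∀ k2, k2 < d → f k1 = f k2 → k1 = k2 := by
    intro k1 hk1 k2 hk2 he
    have : (a + k1) % n = (a + k2) % n := congrArg Fin.val he
    exact mod_add_cancel this (by omega) (by omega)
  set eF : Finset (Fin n) := (Finset.range d).image f with heF
  set w : Fin n := f r with hw
  have hweF : w ∈ eF := Finset.mem_image_of_mem f (Finset.mem_range.mpr (by omega))
  set S := eF.erase w with hS
  have heFcard : eF.card = d := by
    rw [heF, Finset.card_image_of_injOn, Finset.card_range]
    intro x hx y hy hxy
    simp only [Finset.coe_range, Set.mem_Iio] at hx hy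
    exact hfinj x hx y hy hxy
  have hScard : S.card = d - 1 := by
    rw [hS, Finset.card_erase_of_mem hweF, heFcard]
  have heFim : eF.image Fin.val = arcEdge n d a := by
    rw [heF, Finset.image_image]; rfl
  have hwval : (w : ℕ) = (j + t) % n := hir
  have hwB : w ∉ B := by
    rintro ⟨k, hk, hke⟩
    have h1 : (j + t) % n = (j + k) % n := by rw [← hwval, hke]
    have h2 : t = k := mod_add_cancel h1 htn (by omega)
    omega
  refine ⟨S, w, hScard, Finset.notMem_erase _ _, hwB, ?_, ?_, ?_⟩
  · rw [hS, Finset.insert_erase hweF, hedges]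
    exact ⟨i, him, heFim⟩
  · intro u huB hu
    rw [hedges] at hu
    obtain ⟨i', hi'm, hi'eq⟩ := hu
    set b := ℓ i' with hb
    have hbn : b < n := hltn i' hi'm
    by_cases huS : u ∈ S
    · exfalso
      rw [Finset.insert_eq_self.mpr huS] at hi'eq
      have hc1 : (S.image Fin.val).card = d - 1 := by
        rw [Finset.card_image_of_injective _ Fin.val_injective, hScard]
      rw [hi'eq, arc_card (by omega) hn0] at hc1
      omega
    · have hsub : ∀ k, k < d → k ≠ r → (a + k) % n ∈ arcEdge n d b := by
        intro k hk hkr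
        have hfkS : f k ∈ S := by
          rw [hS, Finset.mem_erase]
          refine ⟨fun hfe => hkr (hfinj k hk r (by omega) hfe), ?_⟩
          exact Finset.mem_image_of_mem f (Finset.mem_range.mpr hk)
        have hmem : (f k : ℕ) ∈ (insert u S).image Fin.val :=
          Finset.mem_image_of_mem _ (Finset.mem_insert_of_mem hfkS)
        rwa [hi'eq] at hmem
      rcases arc_subset_cases hd hn han hbn hr1 hr2 hsub with hba | ⟨hrd, hbeq⟩
      · -- the covering edge is the same arc: u must be w
        have huv : (u : ℕ) ∈ arcEdge n d a := by
          rw [← hba, ← hi'eq]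
          exact Finset.mem_image_of_mem _ (Finset.mem_insert_self u S)
        rw [← heFim] at huv
        obtain ⟨v, hveF, hvu⟩ := Finset.mem_image.mp huv
        have hueF : u ∈ eF := by
          have : v = u := Fin.val_injective hvu
          rwa [this] at hveF
        by_contra hne
        exact huS (Finset.mem_erase.mpr ⟨hne, hueF⟩)
      · -- the covering edge is shifted one counterclockwise: u would be blue
        exfalso
        have huv : (u : ℕ) ∈ arcEdge n d b := by
          rw [← hi'eq]
          exact Finset.mem_image_of_mem _ (Finset.mem_insert_self u S)
        obtain ⟨k, hk, hkeq⟩ := arc_mem_iff.mp huv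
        rcases Nat.eq_zero_or_pos k with hk0 | hk0
        · apply huB
          refine ⟨t - d, by omega, ?_⟩
          have h1 : (u : ℕ) = (a + (n - 1)) % n := by
            rw [← hkeq, hk0, Nat.add_zero, Nat.mod_eq_of_lt hbn, hbeq]
          have h2 : (a + (n - 1)) + d ≡ (j + (t - d)) + d [MOD n] := by
            show ((a + (n - 1)) + d) % n = ((j + (t - d)) + d) % n
            rw [show a + (n - 1) + d = (a + r) + n by omega,
              show j + (t - d) + d = j + t by omega, Nat.add_mod_right]
            exact hir
          have h3 : (a + (n - 1)) % n = (j + (t - d)) % n :=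
            Nat.ModEq.add_right_cancel' d h2
          rw [h1, h3]
        · apply huS
          have huf : u = f (k - 1) := by
            apply Fin.val_injective
            show (u : ℕ) = (a + (k - 1)) % n
            rw [← hkeq, hbeq, Nat.mod_add_mod,
              show a + (n - 1) + k = (a + (k - 1)) + n by omega, Nat.add_mod_right]
          rw [huf, hS, Finset.mem_erase]
          refine ⟨fun hfe => ?_, Finset.mem_image_of_mem f (Finset.mem_range.mpr (by omega))⟩
          have := hfinj (k - 1) (by omega) r (by omega) hfe
          omega
  · ext v
    simp only [hB, Set.mem_insert_iff, Set.mem_setOf_eq]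
    constructor
    · rintro ⟨k, hk, hke⟩
      rcases Nat.lt_or_ge k t with h | h
      · exact Or.inr ⟨k, h, hke⟩
      · left
        have hkt : k = t := by omega
        apply Fin.val_injective
        rw [hke, hkt, hwval]
    · rintro (rfl | ⟨k, hk, hke⟩)
      · exact ⟨t, by omega, hwval⟩
      · exact ⟨k, by omega, hke⟩

theorem stmt13 {n d m : ℕ} (hd : 2 ≤ d) (hn : d + 2 ≤ n) (hm : 1 ≤ m)
    (ℓ : ℕ → ℕ) (hmono : ∀ i j : ℕ, i < j → j < m → ℓ i < ℓ j)
    (h0 : ℓ 0 = 0) (hltn : ∀ i < m, ℓ i < n)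
    (hgap : ∀ i : ℕ, i + 1 < m → ℓ (i + 1) ≤ ℓ i + d - 1)
    (hlast : n - d + 1 ≤ ℓ (m - 1))
    (H : HGraph (Fin n))
    (hedges : H.edges = {e : Finset (Fin n) | ∃ i < m, e.image Fin.val = arcEdge n d (ℓ i)})
    (j : ℕ) :
    IsZFSet H d {v : Fin n | ∃ k < d, (v : ℕ) = (j + k) % n} := by
  have hn0 : 0 < n := by omega
  have key : ∀ t, d ≤ t → t ≤ n →
      Relation.ReflTransGen (ZFStep H d)
        {v : Fin n | ∃ k < d, (v : ℕ) = (j + k) % n}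
        {v : Fin n | ∃ k < t, (v : ℕ) = (j + k) % n} := by
    intro t
    induction t with
    | zero => intro h1 h2; omega
    | succ t ih =>
      intro h1 h2
      rcases Nat.lt_or_ge t d with h | h
      · have htd : t + 1 = d := by omega
        rw [htd]
      · exact Relation.ReflTransGen.tail (ih h (by omega))
          (zf_arc_step hd hn hm ℓ h0 hltn hgap hlast H hedges j t h (by omega))
  have huniv : {v : Fin n | ∃ k < n, (v : ℕ) = (j + k) % n} = Set.univ := by
    ext v
    simp only [Set.mem_setOf_eq, Set.mem_univ, iff_true]
    refine ⟨((v : ℕ) + (n - j % n)) % n, Nat.mod_lt _ hn0, ?_⟩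
    have hjm : j % n < n := Nat.mod_lt j hn0
    have hdm := Nat.div_add_mod j n
    have e1 : j + ((v : ℕ) + (n - j % n)) = ((v : ℕ) + (j / n) * n) + n := by
      have : n * (j / n) = (j / n) * n := Nat.mul_comm _ _
      omega
    rw [Nat.add_mod_mod, e1, Nat.add_mod_right, Nat.add_mul_mod_self_right,
      Nat.mod_eq_of_lt v.isLt]
  have h := key n (by omega) le_rfl
  rwa [huniv] at h
end

section
/- Let d ≥ 3 and let t be a positive integer with t ≤ d − 1 such that d − t divides d + 1. Then the t-tight circular-arc d-uniform hypergraph on d + 1 vertices satisfies Z₀(C_{d+1}^{(d)}(t)) = 1 (and consequently 0 ≤ M(C_{d+1}^{(d)}(t)) ≤ 1). -/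
/-! Auxiliary lemmas for Statement 15. -/

section Aux15

/-- The vertex missed by the `i`-th edge of `tightCA d t`. -/
def cVert (d t i : ℕ) (hd : 0 < d) : Fin (d + 1) :=
  ⟨(i * (d - t) + d) % (d + 1), Nat.mod_lt _ (by omega)⟩

lemma arcEdge_eq (d ℓ : ℕ) (hd : 1 ≤ d) :
    arcEdge (d + 1) d ℓ = (Finset.range (d + 1)).erase ((ℓ + d) % (d + 1)) := by
  have hsub : arcEdge (d + 1) d ℓ ⊆ (Finset.range (d + 1)).erase ((ℓ + d) % (d + 1)) := by
    intro m hm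
    simp only [arcEdge, Finset.mem_image, Finset.mem_range] at hm
    obtain ⟨k, hk, rfl⟩ := hm
    refine Finset.mem_erase.mpr ⟨?_, Finset.mem_range.mpr (Nat.mod_lt _ (by omega))⟩
    intro h
    have h2 : k % (d + 1) = d % (d + 1) :=
      Nat.ModEq.add_left_cancel' ℓ h
    rw [Nat.mod_eq_of_lt (by omega), Nat.mod_eq_of_lt (by omega)] at h2
    omega
  have hcard : (arcEdge (d + 1) d ℓ).card = d := by
    rw [arcEdge, Finset.card_image_of_injOn, Finset.card_range]
    intro a ha b hb hab
    simp only [Finset.coe_range, Set.mem_Iio] at ha hb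
    have h2 : a % (d + 1) = b % (d + 1) := Nat.ModEq.add_left_cancel' ℓ hab
    rw [Nat.mod_eq_of_lt (by omega), Nat.mod_eq_of_lt (by omega)] at h2
    omega
  have hcard2 : ((Finset.range (d + 1)).erase ((ℓ + d) % (d + 1))).card = d := by
    rw [Finset.card_erase_of_mem (Finset.mem_range.mpr (Nat.mod_lt _ (by omega))),
      Finset.card_range]
    omega
  exact Finset.eq_of_subset_of_card_le hsub (by omega)

lemma erase_image_val (d : ℕ) (c : Fin (d + 1)) :
    (Finset.univ.erase c).image Fin.val = (Finset.range (d + 1)).erase (c : ℕ) := by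
  ext m
  simp only [Finset.mem_image, Finset.mem_erase, Finset.mem_univ, and_true,
    Finset.mem_range]
  constructor
  · rintro ⟨a, ha, rfl⟩
    exact ⟨fun h => ha (Fin.ext h), a.isLt⟩
  · rintro ⟨hne, hlt⟩
    exact ⟨⟨m, hlt⟩, fun h => hne (by simpa using congrArg Fin.val h), rfl⟩

lemma mem_tightCA_edges {d t : ℕ} (hd : 3 ≤ d) (ht : t ≤ d - 1)
    {e : Finset (Fin (d + 1))} :
    e ∈ (tightCA d t).edges ↔
      ∃ i < (d + 1) / (d - t), e = Finset.univ.erase (cVert d t i (by omega)) := by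
  have hd0 : 0 < d := by omega
  constructor
  · rintro ⟨i, hi, he⟩
    refine ⟨i, hi, ?_⟩
    apply Finset.image_injective (f := Fin.val) Fin.val_injective
    rw [he, erase_image_val, arcEdge_eq d _ (by omega)]
    rfl
  · rintro ⟨i, hi, rfl⟩
    refine ⟨i, hi, ?_⟩
    rw [erase_image_val, arcEdge_eq d _ (by omega)]
    rfl

lemma tightCA_edge_card {d t : ℕ} (hd : 3 ≤ d) (ht : t ≤ d - 1)
    {e : Finset (Fin (d + 1))} (he : e ∈ (tightCA d t).edges) : e.card = d := by
  obtain ⟨i, hi, rfl⟩ := (mem_tightCA_edges hd ht).mp he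
  rw [Finset.card_erase_of_mem (Finset.mem_univ _), Finset.card_univ, Fintype.card_fin]
  omega

lemma cVert_zero {d t : ℕ} (hd : 3 ≤ d) :
    cVert d t 0 (by omega) = Fin.last d := by
  apply Fin.ext
  simp [cVert, Nat.mod_eq_of_lt (by omega : d < d + 1), Fin.last]

lemma s_pos {d t : ℕ} (hd : 3 ≤ d) (ht : t ≤ d - 1) : 0 < (d + 1) / (d - t) :=
  Nat.div_pos (by omega) (by omega)

lemma erase_last_mem_edges {d t : ℕ} (hd : 3 ≤ d) (ht : t ≤ d - 1) :
    Finset.univ.erase (Fin.last d) ∈ (tightCA d t).edges := by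
  rw [mem_tightCA_edges hd ht]
  exact ⟨0, s_pos hd ht, by rw [cVert_zero hd]⟩

/-- From a blue set containing the last vertex, any white vertex can be forced. -/
lemma tightCA_step {d t : ℕ} (hd : 3 ≤ d) (ht : t ≤ d - 1)
    (B : Set (Fin (d + 1))) (hB : Fin.last d ∈ B) (w : Fin (d + 1)) (hw : w ∉ B) :
    ZFStep (tightCA d t) d B (insert w B) := by
  have hwne : w ≠ Fin.last d := fun h => hw (h ▸ hB)
  have hwm : w ∈ Finset.univ.erase (Fin.last d) :=
    Finset.mem_erase.mpr ⟨hwne, Finset.mem_univ w⟩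
  refine ⟨(Finset.univ.erase (Fin.last d)).erase w, w, ?_, Finset.notMem_erase _ _, hw, ?_, ?_, rfl⟩
  · rw [Finset.card_erase_of_mem hwm,
      Finset.card_erase_of_mem (Finset.mem_univ _), Finset.card_univ, Fintype.card_fin]
    omega
  · rw [Finset.insert_erase hwm]
    exact erase_last_mem_edges hd ht
  · intro u hu hue
    by_cases huS : u ∈ (Finset.univ.erase (Fin.last d)).erase w
    · exfalso
      rw [Finset.insert_eq_self.mpr huS] at hue
      have hc := tightCA_edge_card hd ht hue
      rw [Finset.card_erase_of_mem hwm,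
        Finset.card_erase_of_mem (Finset.mem_univ _), Finset.card_univ,
        Fintype.card_fin] at hc
      omega
    · simp only [Finset.mem_erase, Finset.mem_univ, and_true, not_and, not_not] at huS
      by_cases huw : u = w
      · exact huw
      · exact absurd (huS huw ▸ hB) hu

lemma tightCA_reach {d t : ℕ} (hd : 3 ≤ d) (ht : t ≤ d - 1) :
    ∀ (W : Finset (Fin (d + 1))) (B : Set (Fin (d + 1))), Fin.last d ∈ B →
      (∀ v, v ∉ B → v ∈ W) →
      Relation.ReflTransGen (ZFStep (tightCA d t) d) B Set.univ := by
  intro W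
  induction W using Finset.strongInduction with
  | _ W ih =>
    intro B hB hW
    by_cases hall : ∀ v, v ∈ B
    · have : B = Set.univ := Set.eq_univ_of_forall hall
      rw [this]
    · push_neg at hall
      obtain ⟨w, hw⟩ := hall
      have hwW : w ∈ W := hW w hw
      refine Relation.ReflTransGen.head (tightCA_step hd ht B hB w hw) ?_
      refine ih (W.erase w) (Finset.erase_ssubset hwW) _ (Set.mem_insert_iff.mpr (Or.inr hB)) ?_
      intro v hv
      simp only [Set.mem_insert_iff, not_or] at hv
      exact Finset.mem_erase.mpr ⟨hv.1, hW v hv.2⟩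

/-- Invariant: starting from the empty set, no missed vertex (edge complement)
ever becomes blue. -/
lemma tightCA_empty_invariant {d t : ℕ} (hd : 3 ≤ d) (ht : t ≤ d - 1)
    {B : Set (Fin (d + 1))}
    (h : Relation.ReflTransGen (ZFStep (tightCA d t) d) ∅ B) :
    ∀ i, (hi : i < (d + 1) / (d - t)) → cVert d t i (by omega) ∉ B := by
  induction h with
  | refl => intro i hi h; exact h
  | tail _ hstep ih =>
    obtain ⟨S, w, hScard, hwS, hwB, hedge, huniq, rfl⟩ := hstep
    intro i hi hmem
    rcases Set.mem_insert_iff.mp hmem with hwc | hmem2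
    · -- w is a missed vertex; derive contradiction via uniqueness
      obtain ⟨i', hi', he'⟩ := (mem_tightCA_edges hd ht).mp hedge
      set c := cVert d t i' (by omega) with hc
      have hwc2 : w ≠ c := by
        intro h
        have : w ∈ Finset.univ.erase c := he' ▸ Finset.mem_insert_self w S
        exact (Finset.mem_erase.mp this).1 h
      have hcS : c ∉ S := by
        intro h
        have : c ∈ Finset.univ.erase c := he' ▸ Finset.mem_insert_of_mem h
        exact (Finset.mem_erase.mp this).1 rfl
      have hSeq : S = (Finset.univ.erase c).erase w := by
        rw [← he', Finset.erase_insert hwS]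
      have hcm : c ∈ Finset.univ.erase w :=
        Finset.mem_erase.mpr ⟨fun h => hwc2 h.symm, Finset.mem_univ c⟩
      have hinsc : insert c S = Finset.univ.erase w := by
        rw [hSeq, Finset.erase_right_comm, Finset.insert_erase hcm]
      have hedge2 : insert c S ∈ (tightCA d t).edges := by
        rw [hinsc, mem_tightCA_edges hd ht]
        exact ⟨i, hi, by rw [hwc]⟩
      exact hwc2 ((huniq c (ih i' hi') hedge2).symm)
    · exact ih i hi hmem2

lemma tightCA_Z0 {d t : ℕ} (hd : 3 ≤ d) (ht : t ≤ d - 1) :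
    Z0 (tightCA d t) d = 1 := by
  have h1 : 1 ∈ {k | ∃ B : Finset (Fin (d + 1)), B.card = k ∧
      IsZFSet (tightCA d t) d (↑B : Set (Fin (d + 1)))} := by
    refine ⟨{Fin.last d}, Finset.card_singleton _, ?_⟩
    refine tightCA_reach hd ht Finset.univ _ ?_ (fun v _ => Finset.mem_univ v)
    simp
  have h0 : 0 ∉ {k | ∃ B : Finset (Fin (d + 1)), B.card = k ∧
      IsZFSet (tightCA d t) d (↑B : Set (Fin (d + 1)))} := by
    rintro ⟨B, hBc, hBz⟩
    rw [Finset.card_eq_zero] at hBc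
    subst hBc
    rw [Finset.coe_empty] at hBz
    have := tightCA_empty_invariant hd ht hBz 0 (s_pos hd ht)
    exact this (Set.mem_univ _)
  have hle : Z0 (tightCA d t) d ≤ 1 := Nat.sInf_le h1
  have hmem := Nat.sInf_mem (Set.nonempty_of_mem h1)
  have hne : Z0 (tightCA d t) d ≠ 0 := fun h => h0 (h ▸ hmem)
  omega

/-- A symmetric hypermatrix takes equal values on injective index tuples with
the same image. -/
lemma hmsymm_image_eq {F : Type*} {n d : ℕ} {A : (Fin d → Fin n) → F}
    (hs : HMSymmetric A) {f g : Fin d → Fin n} (hf : Function.Injective f)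
    (hg : Function.Injective g)
    (h : Finset.image f Finset.univ = Finset.image g Finset.univ) : A f = A g := by
  have hr : Set.range f = Set.range g := by
    have := congrArg (fun s : Finset (Fin n) => (↑s : Set (Fin n))) h
    simpa [Set.image_univ] using this
  set π : Equiv.Perm (Fin d) :=
    (Equiv.ofInjective f hf).trans ((Equiv.setCongr hr).trans (Equiv.ofInjective g hg).symm)
  have hgeq : g ∘ π = f := by
    funext k
    simp only [π, Function.comp_apply, Equiv.trans_apply, Equiv.setCongr_apply]
    exact Equiv.apply_ofInjective_symm hg _
  calc A f = A (g ∘ π) := by rw [hgeq]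
    _ = A g := hs g π

lemma tightCA_null_vanish {F : Type*} [Field F] {d t : ℕ} (hd : 3 ≤ d)
    (ht : t ≤ d - 1) {A : (Fin d → Fin (d + 1)) → F}
    (hA : InSFam (tightCA d t) A) {x : Fin (d + 1) → F}
    (hx : x ∈ nullSpace A) (h0 : x (Fin.last d) = 0) : x = 0 := by
  obtain ⟨⟨hsymm, hgr⟩, hHG⟩ := hA
  funext w
  by_cases hwl : w = Fin.last d
  · rw [hwl, h0]; rfl
  · -- set-up
    have hwm : w ∈ Finset.univ.erase (Fin.last d) :=
      Finset.mem_erase.mpr ⟨hwl, Finset.mem_univ w⟩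
    set S : Finset (Fin (d + 1)) := (Finset.univ.erase (Fin.last d)).erase w with hSdef
    have hScard : S.card = d - 1 := by
      rw [hSdef, Finset.card_erase_of_mem hwm,
        Finset.card_erase_of_mem (Finset.mem_univ _), Finset.card_univ, Fintype.card_fin]
      omega
    have hwS : w ∉ S := Finset.notMem_erase _ _
    have hlS : Fin.last d ∉ S := by
      simp [hSdef]
    set eS := S.orderIsoOfFin hScard with heS
    set iF : Fin d → Fin (d + 1) :=
      fun k => if h : (k : ℕ) < d - 1 then (eS ⟨k, h⟩ : Fin (d + 1)) else w with hiF
    have hsum := hx iF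
    set tup : Fin (d + 1) → Fin d → Fin (d + 1) :=
      fun j k => if (k : ℕ) = d - 1 then j else iF k with htup
    have htup_last : ∀ j, tup j ⟨d - 1, by omega⟩ = j := by
      intro j; simp [htup]
    have htup_lt : ∀ j (k : Fin d) (h : (k : ℕ) < d - 1),
        tup j k = (eS ⟨k, h⟩ : Fin (d + 1)) := by
      intro j k h
      simp only [htup, hiF]
      rw [if_neg (by omega), dif_pos h]
    -- all terms except j = w vanish
    have hzero : ∀ j ∈ Finset.univ, j ≠ w →
        A (fun k => if (k : ℕ) = d - 1 then j else iF k) * x j = 0 := by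
      intro j _ hjw
      by_cases hjl : j = Fin.last d
      · rw [hjl, h0, mul_zero]
      · have hjS : j ∈ S := by
          simp only [hSdef, Finset.mem_erase, Finset.mem_univ, and_true]
          exact ⟨hjw, hjl⟩
        -- tuple is not injective
        have hninj : ¬ Function.Injective (tup j) := by
          obtain ⟨k0, hk0⟩ : ∃ k0 : Fin (d - 1), (eS k0 : Fin (d + 1)) = j := by
            refine ⟨eS.symm ⟨j, hjS⟩, ?_⟩
            simp
          intro hinj
          have h1 : tup j ⟨(k0 : ℕ), by omega⟩ = j := by
            have hlt : ((⟨(k0 : ℕ), by omega⟩ : Fin d) : ℕ) < d - 1 := k0.isLt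
            rw [htup_lt j _ hlt]
            have heq : (⟨((⟨(k0 : ℕ), by omega⟩ : Fin d) : ℕ), hlt⟩ : Fin (d - 1)) = k0 :=
              Fin.ext rfl
            rw [heq, hk0]
          have h2 : tup j ⟨d - 1, by omega⟩ = j := htup_last j
          have := hinj (h1.trans h2.symm)
          have hk0lt := k0.isLt
          simp only [Fin.mk.injEq] at this
          omega
        show A (tup j) * x j = 0
        rw [hgr _ hninj, zero_mul]
    have hred : ∑ j : Fin (d + 1),
        A (fun k => if (k : ℕ) = d - 1 then j else iF k) * x j
        = A (tup w) * x w := by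
      rw [Finset.sum_eq_single w hzero (fun h => absurd (Finset.mem_univ w) h)]
    rw [hred] at hsum
    -- A (tup w) ≠ 0
    have hval : ∀ k : Fin d, (k : ℕ) = d - 1 → tup w k = w := by
      intro k hk
      have : k = ⟨d - 1, by omega⟩ := Fin.ext hk
      rw [this, htup_last]
    have hinj : Function.Injective (tup w) := by
      intro a b hab
      have hab' : tup w a = tup w b := hab
      by_cases ha : (a : ℕ) = d - 1 <;> by_cases hb : (b : ℕ) = d - 1
      · exact Fin.ext (by omega)
      · exfalso
        have hblt : (b : ℕ) < d - 1 := by omega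
        rw [hval a ha, htup_lt w b hblt] at hab'
        exact hwS (hab'.symm ▸ (eS ⟨b, hblt⟩).2)
      · exfalso
        have halt : (a : ℕ) < d - 1 := by omega
        rw [hval b hb, htup_lt w a halt] at hab'
        exact hwS (hab' ▸ (eS ⟨a, halt⟩).2)
      · have halt : (a : ℕ) < d - 1 := by omega
        have hblt : (b : ℕ) < d - 1 := by omega
        rw [htup_lt w a halt, htup_lt w b hblt] at hab'
        have := eS.injective (Subtype.ext hab')
        simp only [Fin.mk.injEq] at this
        exact Fin.ext (by omega)
    have himg : Finset.image (tup w) Finset.univ = Finset.univ.erase (Fin.last d) := by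
      have h1 : Finset.image (tup w) Finset.univ = insert w S := by
        apply Finset.Subset.antisymm
        · intro v hv
          obtain ⟨k, _, rfl⟩ := Finset.mem_image.mp hv
          by_cases hk : (k : ℕ) = d - 1
          · have : tup w k = w := by simp [htup, hk]
            rw [this]; exact Finset.mem_insert_self _ _
          · have hklt : (k : ℕ) < d - 1 := by omega
            rw [htup_lt w k hklt]
            exact Finset.mem_insert_of_mem (eS ⟨k, hklt⟩).2
        · intro v hv
          rcases Finset.mem_insert.mp hv with rfl | hvS
          · exact Finset.mem_image.mpr ⟨⟨d - 1, by omega⟩, Finset.mem_univ _, htup_last v⟩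
          · obtain ⟨k0, hk0⟩ : ∃ k0 : Fin (d - 1), (eS k0 : Fin (d + 1)) = v :=
              ⟨eS.symm ⟨v, hvS⟩, by simp⟩
            refine Finset.mem_image.mpr ⟨⟨(k0 : ℕ), by omega⟩, Finset.mem_univ _, ?_⟩
            have hlt : ((⟨(k0 : ℕ), by omega⟩ : Fin d) : ℕ) < d - 1 := k0.isLt
            rw [htup_lt w _ hlt]
            have heq : (⟨((⟨(k0 : ℕ), by omega⟩ : Fin d) : ℕ), hlt⟩ : Fin (d - 1)) = k0 :=
              Fin.ext rfl
            rw [heq, hk0]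
      rw [h1, hSdef, Finset.insert_erase hwm]
    have hAne : A (tup w) ≠ 0 := by
      have hedge : Finset.univ.erase (Fin.last d) ∈ (hypergraphOf A).edges := by
        rw [hHG]; exact erase_last_mem_edges hd ht
      obtain ⟨i', hi'inj, hi'img, hi'ne⟩ := hedge
      have := hmsymm_image_eq hsymm hinj hi'inj (himg.trans hi'img.symm)
      rw [this]; exact hi'ne
    have hxw := (mul_eq_zero.mp hsum).resolve_left hAne
    rw [hxw]; rfl

lemma tightCA_nullity_le {F : Type*} [Field F] {d t : ℕ} (hd : 3 ≤ d)
    (ht : t ≤ d - 1) {A : (Fin d → Fin (d + 1)) → F}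
    (hA : InSFam (tightCA d t) A) : hmNullity F A ≤ 1 := by
  have hinj : Function.Injective
      ((LinearMap.proj (Fin.last d) : (Fin (d + 1) → F) →ₗ[F] F).comp
        (nullSpace A).subtype) := by
    rw [← LinearMap.ker_eq_bot]
    rw [LinearMap.ker_eq_bot']
    rintro ⟨x, hx⟩ hfx
    have h0 : x (Fin.last d) = 0 := hfx
    have := tightCA_null_vanish hd ht hA hx h0
    exact Subtype.ext this
  calc hmNullity F A = Module.finrank F (nullSpace A) := rfl
    _ ≤ Module.finrank F F := LinearMap.finrank_le_finrank_of_injective hinj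
    _ = 1 := Module.finrank_self F

end Aux15

theorem stmt15 (F : Type*) [Field F] {d t : ℕ} (hd : 3 ≤ d) (ht1 : 1 ≤ t)
    (ht : t ≤ d - 1) (hdvd : (d - t) ∣ (d + 1)) :
    Z0 (tightCA d t) d = 1 ∧ maxNullity F d (tightCA d t) ≤ 1 := by
  refine ⟨tightCA_Z0 hd ht, ?_⟩
  rw [maxNullity]
  set SS := {k | ∃ A : (Fin d → Fin (d + 1)) → F, InSFam (tightCA d t) A ∧
    hmNullity F A = k} with hSS
  rcases Set.eq_empty_or_nonempty SS with hemp | hne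
  · rw [hemp, csSup_empty]
    exact Nat.zero_le 1
  · refine csSup_le hne ?_
    rintro k ⟨A, hA, rfl⟩
    exact tightCA_nullity_le hd ht hA
end

section
/- Let H be a d-uniform hypergraph with d ≥ 2. Then: (1) for any edge e of H, Z₀(H) − d ≤ Z₀(H − e) ≤ Z₀(H) + d; (2) for any vertex v of H, Z₀(H) − 1 ≤ Z₀(H − v); and (3) if d = 2 (i.e., H is a graph), then Z₀(H − v) ≤ Z₀(H) + 1 for any vertex v. -/
/-! ### Auxiliary lemmas for stmt16 -/

lemma z0_spec {V : Type*} [DecidableEq V] [Fintype V] (H : HGraph V) (d : ℕ) :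
    ∃ B : Finset V, B.card = Z0 H d ∧ IsZFSet H d (↑B : Set V) := by
  have hne : {k | ∃ B : Finset V, B.card = k ∧ IsZFSet H d (↑B : Set V)}.Nonempty :=
    ⟨Finset.univ.card, Finset.univ, rfl, by
      show Relation.ReflTransGen _ _ _
      rw [Finset.coe_univ]⟩
  obtain ⟨B, hB, hZF⟩ := Nat.sInf_mem hne
  exact ⟨B, hB, hZF⟩

lemma z0_le {V : Type*} [DecidableEq V] [Fintype V] (H : HGraph V) (d : ℕ)
    {B : Finset V} (h : IsZFSet H d (↑B : Set V)) : Z0 H d ≤ B.card :=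
  Nat.sInf_le ⟨B, rfl, h⟩

lemma zf_deleteEdge_up {V : Type*} [DecidableEq V] (H : HGraph V) (d : ℕ) (e : Finset V)
    {B : Set V} (h : Relation.ReflTransGen (ZFStep (deleteEdge H e) d) B Set.univ) :
    Relation.ReflTransGen (ZFStep H d) (B ∪ ↑e) Set.univ := by
  induction h using Relation.ReflTransGen.head_induction_on with
  | refl => rw [Set.univ_union]
  | @head B B₁ hstep _ ih =>
    obtain ⟨S, w, hS, hwS, hwB, hedge, huniq, hB'⟩ := hstep
    by_cases hwe : w ∈ (↑e : Set V)
    · have heq : B₁ ∪ (↑e : Set V) = B ∪ ↑e := by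
        rw [hB', Set.insert_union, Set.insert_eq_of_mem (Set.mem_union_right _ hwe)]
      rwa [heq] at ih
    · refine Relation.ReflTransGen.head
        ⟨S, w, hS, hwS, fun hc => hc.elim (fun h => hwB h) hwe, hedge.1, ?_, rfl⟩ ?_
      · intro u hu he'
        refine huniq u (fun hc => hu (Or.inl hc)) ⟨he', ?_⟩
        intro hc
        rw [Set.mem_singleton_iff] at hc
        exact hu (Or.inr (by rw [← hc]; exact Finset.mem_insert_self u S))
      · rwa [hB', Set.insert_union] at ih

lemma zf_deleteEdge_down {V : Type*} [DecidableEq V] (H : HGraph V) (d : ℕ) (e : Finset V)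
    {B : Set V} (h : Relation.ReflTransGen (ZFStep H d) B Set.univ) :
    Relation.ReflTransGen (ZFStep (deleteEdge H e) d) (B ∪ ↑e) Set.univ := by
  induction h using Relation.ReflTransGen.head_induction_on with
  | refl => rw [Set.univ_union]
  | @head B B₁ hstep _ ih =>
    obtain ⟨S, w, hS, hwS, hwB, hedge, huniq, hB'⟩ := hstep
    by_cases hwe : w ∈ (↑e : Set V)
    · have heq : B₁ ∪ (↑e : Set V) = B ∪ ↑e := by
        rw [hB', Set.insert_union, Set.insert_eq_of_mem (Set.mem_union_right _ hwe)]
      rwa [heq] at ih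
    · refine Relation.ReflTransGen.head
        ⟨S, w, hS, hwS, fun hc => hc.elim (fun h => hwB h) hwe, ⟨hedge, ?_⟩, ?_, rfl⟩ ?_
      · intro hc
        rw [Set.mem_singleton_iff] at hc
        exact hwe (by rw [← hc]; exact Finset.mem_insert_self w S)
      · intro u hu he'
        exact huniq u (fun hc => hu (Or.inl hc)) he'.1
      · rwa [hB', Set.insert_union] at ih

lemma zf_deleteVertex_up {V : Type*} [DecidableEq V] (H : HGraph V) (d : ℕ) (v : V)
    {B : Set {u : V // u ≠ v}}
    (h : Relation.ReflTransGen (ZFStep (deleteVertex H v) d) B Set.univ) :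
    Relation.ReflTransGen (ZFStep H d) (Subtype.val '' B ∪ {v}) Set.univ := by
  induction h using Relation.ReflTransGen.head_induction_on with
  | refl =>
    have : Subtype.val '' (Set.univ : Set {u : V // u ≠ v}) ∪ {v} = Set.univ := by
      ext x
      simp only [Set.image_univ, Subtype.range_coe_subtype, Set.mem_union, Set.mem_setOf_eq,
        Set.mem_singleton_iff, Set.mem_univ, iff_true]
      by_cases hx : x = v <;> tauto
    rw [this]
  | @head B B₁ hstep _ ih =>
    obtain ⟨S, w, hS, hwS, hwB, hedge, huniq, hB'⟩ := hstep
    have himg : (insert w S).image Subtype.val ∈ H.edges := hedge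
    rw [Finset.image_insert] at himg
    refine Relation.ReflTransGen.head
      ⟨S.image Subtype.val, (w : V), ?_, ?_, ?_, himg, ?_, rfl⟩ ?_
    · rw [Finset.card_image_of_injective _ Subtype.val_injective]; exact hS
    · intro hc
      obtain ⟨x, hx, hxe⟩ := Finset.mem_image.mp hc
      exact hwS (by rwa [Subtype.val_injective hxe] at hx)
    · rintro (⟨x, hx, hxe⟩ | hc)
      · exact hwB (by rwa [Subtype.val_injective hxe] at hx)
      · exact w.property hc
    · intro u hu he'
      have huv : u ≠ v := fun hc => hu (Or.inr hc)
      have hedge' : insert (⟨u, huv⟩ : {u : V // u ≠ v}) S ∈ (deleteVertex H v).edges := by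
        show (insert (⟨u, huv⟩ : {u : V // u ≠ v}) S).image Subtype.val ∈ H.edges
        rwa [Finset.image_insert]
      have huB : (⟨u, huv⟩ : {u : V // u ≠ v}) ∉ B := fun hc =>
        hu (Or.inl ⟨⟨u, huv⟩, hc, rfl⟩)
      have := huniq ⟨u, huv⟩ huB hedge'
      exact congrArg Subtype.val this
    · have : Subtype.val '' B₁ ∪ {v} = insert (w : V) (Subtype.val '' B ∪ {v}) := by
        rw [hB', Set.image_insert_eq, Set.insert_union]
      rwa [this] at ih

lemma zf_step_push {V : Type*} [DecidableEq V] (H : HGraph V) (d : ℕ) (v : V)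
    {B : Set V} {S : Finset V} {w : V}
    (hS : S.card = d - 1) (hwS : w ∉ S)
    (hedge : insert w S ∈ H.edges)
    (huniq : ∀ u : V, u ∉ B → insert u S ∈ H.edges → u = w)
    (hvS : v ∉ S) (hwv : w ≠ v)
    {C : Set {u : V // u ≠ v}} (hBC : {x : {u : V // u ≠ v} | x.val ∈ B} ⊆ C)
    (hwC : (⟨w, hwv⟩ : {u : V // u ≠ v}) ∉ C) :
    ZFStep (deleteVertex H v) d C (insert ⟨w, hwv⟩ C) := by
  have himgS : (S.subtype (fun u => u ≠ v)).image Subtype.val = S := by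
    ext a
    simp only [Finset.mem_image, Finset.mem_subtype]
    constructor
    · rintro ⟨b, hb, rfl⟩; exact hb
    · intro ha; exact ⟨⟨a, fun hc => hvS (hc ▸ ha)⟩, ha, rfl⟩
  refine ⟨S.subtype (fun u => u ≠ v), ⟨w, hwv⟩, ?_, ?_, hwC, ?_, ?_, rfl⟩
  · calc (S.subtype fun u => u ≠ v).card
        = ((S.subtype fun u => u ≠ v).image Subtype.val).card :=
          (Finset.card_image_of_injective _ Subtype.val_injective).symm
      _ = S.card := by rw [himgS]
      _ = d - 1 := hS
  · intro hc
    exact hwS (Finset.mem_subtype.mp hc)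
  · show (insert (⟨w, hwv⟩ : {u : V // u ≠ v}) (S.subtype fun u => u ≠ v)).image
      Subtype.val ∈ H.edges
    rwa [Finset.image_insert, himgS]
  · intro u' hu' hedge'
    have himg' : (insert u' (S.subtype fun u => u ≠ v)).image Subtype.val ∈ H.edges := hedge'
    rw [Finset.image_insert, himgS] at himg'
    have : u'.val ∉ B := fun hc => hu' (hBC hc)
    exact Subtype.ext (huniq u'.val this himg')

lemma zf_deleteVertex_down {V : Type*} [DecidableEq V] (H : HGraph V) (d : ℕ) (v : V)
    {B : Set V} (h : Relation.ReflTransGen (ZFStep H d) B Set.univ) :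
    (∀ e ∈ H.edges, v ∈ e → ∀ u ∈ e, u ≠ v → u ∈ B) →
    Relation.ReflTransGen (ZFStep (deleteVertex H v) d)
      {x : {u : V // u ≠ v} | x.val ∈ B} Set.univ := by
  induction h using Relation.ReflTransGen.head_induction_on with
  | refl =>
    intro _
    have : {x : {u : V // u ≠ v} | x.val ∈ Set.univ} = Set.univ := by
      ext x; simp
    rw [this]
  | @head B B₁ hstep _ ih =>
    intro hv
    obtain ⟨S, w, hS, hwS, hwB, hedge, huniq, hB'⟩ := hstep
    have hvB₁ : ∀ e ∈ H.edges, v ∈ e → ∀ u ∈ e, u ≠ v → u ∈ B₁ := by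
      intro e' he' hve' u hue' huv
      rw [hB']
      exact Set.mem_insert_iff.mpr (Or.inr (hv e' he' hve' u hue' huv))
    by_cases hvS : v ∈ S
    · have hwv : w ≠ v := fun h => hwS (h ▸ hvS)
      exact absurd (hv (insert w S) hedge (Finset.mem_insert_of_mem hvS) w
        (Finset.mem_insert_self _ _) hwv) hwB
    by_cases hwv : w = v
    · have hBB : {x : {u : V // u ≠ v} | x.val ∈ B₁} = {x : {u : V // u ≠ v} | x.val ∈ B} := by
        ext x
        simp only [Set.mem_setOf_eq, hB', Set.mem_insert_iff, hwv]
        constructor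
        · rintro (hc | hx)
          · exact absurd hc x.property
          · exact hx
        · exact Or.inr
      rw [← hBB]
      exact ih hvB₁
    · have hstep' := zf_step_push H d v hS hwS hedge huniq hvS hwv
        (C := {x : {u : V // u ≠ v} | x.val ∈ B}) (le_refl _) (fun hc => hwB hc)
      have hBB : insert (⟨w, hwv⟩ : {u : V // u ≠ v}) {x : {u : V // u ≠ v} | x.val ∈ B}
          = {x : {u : V // u ≠ v} | x.val ∈ B₁} := by
        ext x
        simp only [Set.mem_insert_iff, Set.mem_setOf_eq, hB', Subtype.ext_iff]
      exact Relation.ReflTransGen.head hstep' (hBB ▸ ih hvB₁)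

lemma zf_deleteVertex_down2 {V : Type*} [DecidableEq V] (H : HGraph V) (v : V)
    (hH : H.IsUniform 2) {B : Set V}
    (h : Relation.ReflTransGen (ZFStep H 2) B Set.univ) :
    Relation.ReflTransGen (ZFStep (deleteVertex H v) 2)
      {x : {u : V // u ≠ v} | x.val ∈ B} Set.univ ∨
    ∃ w₀ : {u : V // u ≠ v}, Relation.ReflTransGen (ZFStep (deleteVertex H v) 2)
      (insert w₀ {x : {u : V // u ≠ v} | x.val ∈ B}) Set.univ := by
  induction h using Relation.ReflTransGen.head_induction_on with
  | refl =>
    left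
    have : {x : {u : V // u ≠ v} | x.val ∈ Set.univ} = Set.univ := by
      ext x; simp
    rw [this]
  | @head B B₁ hstep hnext ih =>
    obtain ⟨S, w, hS, hwS, hwB, hedge, huniq, hB'⟩ := hstep
    obtain ⟨s, rfl⟩ : ∃ s, S = {s} := Finset.card_eq_one.mp hS
    by_cases hwv : w = v
    · have hBB : {x : {u : V // u ≠ v} | x.val ∈ B₁} = {x : {u : V // u ≠ v} | x.val ∈ B} := by
        ext x
        simp only [Set.mem_setOf_eq, hB', Set.mem_insert_iff, hwv]
        constructor
        · rintro (hc | hx)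
          · exact absurd hc x.property
          · exact hx
        · exact Or.inr
      rw [← hBB]
      exact ih
    by_cases hsv : s = v
    · -- v performed the force: afterwards all neighbors of v are blue
      subst hsv
      right
      refine ⟨⟨w, hwv⟩, ?_⟩
      have hcond : ∀ e ∈ H.edges, s ∈ e → ∀ u ∈ e, u ≠ s → u ∈ B₁ := by
        intro e' he' hse' u hue' hus
        have hcard : e'.card = 2 := hH e' he'
        have hsub : insert u {s} ⊆ e' := by
          intro x hx
          rcases Finset.mem_insert.mp hx with rfl | hx
          · exact hue'
          · rwa [Finset.mem_singleton.mp hx]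
        have hcins : (insert u ({s} : Finset V)).card = 2 := by
          rw [Finset.card_insert_of_notMem (by simpa using hus), Finset.card_singleton]
        have he'' : insert u {s} = e' :=
          Finset.eq_of_subset_of_card_le hsub (by omega)
        by_cases huB : u ∈ B
        · rw [hB']; exact Set.mem_insert_iff.mpr (Or.inr huB)
        · have := huniq u huB (he'' ▸ he')
          rw [hB', this]
          exact Set.mem_insert _ _
      have hres := zf_deleteVertex_down H 2 s hnext hcond
      have hBB : {x : {u : V // u ≠ s} | x.val ∈ B₁}
          = insert (⟨w, hwv⟩ : {u : V // u ≠ s}) {x : {u : V // u ≠ s} | x.val ∈ B} := by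
        ext x
        simp only [Set.mem_insert_iff, Set.mem_setOf_eq, hB', Subtype.ext_iff]
      rwa [hBB] at hres
    · -- s ≠ v and w ≠ v : simulate the step
      have hvS : v ∉ ({s} : Finset V) := by simpa using fun hc => hsv hc.symm
      have hBB : insert (⟨w, hwv⟩ : {u : V // u ≠ v}) {x : {u : V // u ≠ v} | x.val ∈ B}
          = {x : {u : V // u ≠ v} | x.val ∈ B₁} := by
        ext x
        simp only [Set.mem_insert_iff, Set.mem_setOf_eq, hB', Subtype.ext_iff]
      rcases ih with ih | ⟨w₀, ih⟩
      · left
        have hstep' := zf_step_push H 2 v hS hwS hedge huniq hvS hwv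
          (C := {x : {u : V // u ≠ v} | x.val ∈ B}) (le_refl _) (fun hc => hwB hc)
        exact Relation.ReflTransGen.head hstep' (hBB ▸ ih)
      · right
        refine ⟨w₀, ?_⟩
        by_cases hww : (⟨w, hwv⟩ : {u : V // u ≠ v}) = w₀
        · have : insert w₀ {x : {u : V // u ≠ v} | x.val ∈ B}
              = insert w₀ {x : {u : V // u ≠ v} | x.val ∈ B₁} := by
            rw [← hBB, hww, Set.insert_comm, Set.insert_idem]
          rw [this]
          exact ih
        · have hstep' := zf_step_push H 2 v hS hwS hedge huniq hvS hwv
            (C := insert w₀ {x : {u : V // u ≠ v} | x.val ∈ B})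
            (Set.subset_insert _ _)
            (by
              rintro (hc | hc)
              · exact hww hc
              · exact hwB hc)
          have heq : insert (⟨w, hwv⟩ : {u : V // u ≠ v})
              (insert w₀ {x : {u : V // u ≠ v} | x.val ∈ B})
              = insert w₀ {x : {u : V // u ≠ v} | x.val ∈ B₁} := by
            rw [Set.insert_comm, hBB]
          exact Relation.ReflTransGen.head hstep' (heq ▸ ih)
theorem stmt16 {V : Type*} [DecidableEq V] [Fintype V] {d : ℕ} (hd : 2 ≤ d)
    (H : HGraph V) (hH : H.IsUniform d) :
    (∀ e ∈ H.edges,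
      Z0 H d - d ≤ Z0 (deleteEdge H e) d ∧ Z0 (deleteEdge H e) d ≤ Z0 H d + d) ∧
    (∀ v : V, Z0 H d - 1 ≤ Z0 (deleteVertex H v) d) ∧
    (d = 2 → ∀ v : V, Z0 (deleteVertex H v) d ≤ Z0 H d + 1) := by
  refine ⟨?_, ?_, ?_⟩
  · intro e he
    have hecard : e.card = d := hH e he
    constructor
    · -- Z0 H - d ≤ Z0 (H - e)
      obtain ⟨B, hBcard, hBzf⟩ := z0_spec (deleteEdge H e) d
      have h1 : IsZFSet H d (↑(B ∪ e) : Set V) := by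
        show Relation.ReflTransGen _ _ _
        rw [Finset.coe_union]
        exact zf_deleteEdge_up H d e hBzf
      have h2 : Z0 H d ≤ (B ∪ e).card := z0_le H d h1
      have h3 : (B ∪ e).card ≤ B.card + e.card := Finset.card_union_le _ _
      omega
    · -- Z0 (H - e) ≤ Z0 H + d
      obtain ⟨B, hBcard, hBzf⟩ := z0_spec H d
      have h1 : IsZFSet (deleteEdge H e) d (↑(B ∪ e) : Set V) := by
        show Relation.ReflTransGen _ _ _
        rw [Finset.coe_union]
        exact zf_deleteEdge_down H d e hBzf
      have h2 : Z0 (deleteEdge H e) d ≤ (B ∪ e).card := z0_le _ d h1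
      have h3 : (B ∪ e).card ≤ B.card + e.card := Finset.card_union_le _ _
      omega
  · intro v
    obtain ⟨B, hBcard, hBzf⟩ := z0_spec (deleteVertex H v) d
    have h1 : IsZFSet H d (↑(B.image Subtype.val ∪ {v}) : Set V) := by
      show Relation.ReflTransGen _ _ _
      rw [Finset.coe_union, Finset.coe_image, Finset.coe_singleton]
      exact zf_deleteVertex_up H d v hBzf
    have h2 : Z0 H d ≤ (B.image Subtype.val ∪ {v}).card := z0_le H d h1
    have h3 : (B.image Subtype.val ∪ {v}).card ≤ B.card + 1 := by
      calc (B.image Subtype.val ∪ {v}).card ≤ (B.image Subtype.val).card + 1 :=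
            le_trans (Finset.card_union_le _ _) (by simp)
        _ ≤ B.card + 1 := by
            rw [Finset.card_image_of_injective _ Subtype.val_injective]
    omega
  · rintro rfl v
    obtain ⟨B, hBcard, hBzf⟩ := z0_spec H 2
    rcases zf_deleteVertex_down2 H v hH hBzf with h | ⟨w₀, h⟩
    · have h1 : IsZFSet (deleteVertex H v) 2 (↑(B.subtype (fun u => u ≠ v)) : Set _) := by
        show Relation.ReflTransGen _ _ _
        have hcs : (↑(B.subtype (fun u => u ≠ v)) : Set {u : V // u ≠ v})
            = {x : {u : V // u ≠ v} | x.val ∈ (↑B : Set V)} := by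
          ext x; simp [Finset.mem_subtype]
        rw [hcs]
        exact h
      have h2 := z0_le _ 2 h1
      have h3 : (B.subtype (fun u => u ≠ v)).card ≤ B.card := by
        rw [Finset.card_subtype]
        exact Finset.card_filter_le _ _
      omega
    · have h1 : IsZFSet (deleteVertex H v) 2
          (↑(insert w₀ (B.subtype (fun u => u ≠ v))) : Set _) := by
        show Relation.ReflTransGen _ _ _
        have hcs : (↑(B.subtype (fun u => u ≠ v)) : Set {u : V // u ≠ v})
            = {x : {u : V // u ≠ v} | x.val ∈ (↑B : Set V)} := by
          ext x; simp [Finset.mem_subtype]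
        rw [Finset.coe_insert, hcs]
        exact h
      have h2 := z0_le _ 2 h1
      have h3 : (insert w₀ (B.subtype (fun u => u ≠ v))).card ≤ B.card + 1 := by
        calc (insert w₀ (B.subtype (fun u => u ≠ v))).card
            ≤ (B.subtype (fun u => u ≠ v)).card + 1 := Finset.card_insert_le _ _
          _ ≤ B.card + 1 := by
              rw [Finset.card_subtype]
              exact Nat.add_le_add_right (Finset.card_filter_le _ _) 1
      omega
end

section
/- Let H = (V, E) and H' = (V', E') be d-uniform hypergraphs with d ≥ 3. Then the hypergraph zero forcing number of their Cartesian product satisfies Z₀(H □ H') ≤ Z₀(H) · Z₀(H'). -/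
section Aux

open Relation

variable {V V' : Type*} [DecidableEq V] [DecidableEq V'] {d : ℕ}

/-- Forcing in the second factor lifts to a row copy of the product. -/
lemma copy_snd (hd : 3 ≤ d) (H : HGraph V) (H' : HGraph V') (v : V)
    {C D : Set V'} (h : Relation.ReflTransGen (ZFStep H' d) C D) :
    ∀ X : Set (V × V'), (fun x => (v, x)) '' C ⊆ X →
      Relation.ReflTransGen (ZFStep (cartProd H H') d) X
        (X ∪ (fun x => (v, x)) '' D) := by
  induction h with
  | refl =>
      intro X hX
      rw [Set.union_eq_self_of_subset_right hX]
  | @tail b c hCb hstep ih =>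
      intro X hX
      refine ReflTransGen.trans (ih X hX) ?_
      obtain ⟨S, w, hScard, hwS, hwB, hedge, hforce, rfl⟩ := hstep
      set Y := X ∪ (fun x => (v, x)) '' b with hY
      by_cases hw : (v, w) ∈ Y
      · have : X ∪ (fun x => (v, x)) '' insert w b = Y := by
          rw [Set.image_insert_eq]
          rw [hY] at hw ⊢
          rw [Set.union_insert] at *
          exact Set.insert_eq_self.2 hw
        rw [this]
      · have hinj : Function.Injective (fun x : V' => (v, x)) := by
          intro a b hab; simpa using hab
        have hrw : X ∪ (fun x => (v, x)) '' insert w b = insert (v, w) Y := by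
          rw [Set.image_insert_eq, hY, Set.union_insert]
        rw [hrw]
        refine ReflTransGen.single ?_
        refine ⟨S.image (fun s => (v, s)), (v, w), ?_, ?_, hw, ?_, ?_, rfl⟩
        · rw [Finset.card_image_of_injective _ hinj, hScard]
        · simp [hwS]
        · refine Or.inr ⟨v, insert w S, hedge, ?_⟩
          ext ⟨a, x⟩
          simp [Finset.mem_product, eq_comm, and_or_left]
        · rintro ⟨a, u⟩ huY hedge'
          have hS2 : 2 ≤ S.card := by omega
          obtain ⟨s₁, hs₁, s₂, hs₂, hss⟩ := Finset.one_lt_card.mp hS2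
          rcases hedge' with ⟨e, he, v', hee⟩ | ⟨x, e', he', hee⟩
          · exfalso
            have h₁ : (v, s₁) ∈ e ×ˢ ({v'} : Finset V') := by
              rw [← hee]; exact Finset.mem_insert_of_mem (Finset.mem_image_of_mem _ hs₁)
            have h₂ : (v, s₂) ∈ e ×ˢ ({v'} : Finset V') := by
              rw [← hee]; exact Finset.mem_insert_of_mem (Finset.mem_image_of_mem _ hs₂)
            simp only [Finset.mem_product, Finset.mem_singleton] at h₁ h₂
            exact hss (h₁.2.trans h₂.2.symm)
          · have hx : x = v := by
              have h₁ : (v, s₁) ∈ ({x} : Finset V) ×ˢ e' := by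
                rw [← hee]; exact Finset.mem_insert_of_mem (Finset.mem_image_of_mem _ hs₁)
              simp only [Finset.mem_product, Finset.mem_singleton] at h₁
              exact h₁.1.symm
            rw [hx] at hee
            have hav : a = v := by
              have : (a, u) ∈ ({v} : Finset V) ×ˢ e' := by
                rw [← hee]; exact Finset.mem_insert_self _ _
              simpa using (Finset.mem_product.mp this).1
            rw [hav] at hee huY ⊢
            have hue : insert u S = e' := by
              apply Finset.image_injective hinj
              rw [Finset.image_insert, hee, Finset.singleton_product]
              exact (Finset.map_eq_image _ _)
            have hub : u ∉ b := fun hub => huY (Or.inr ⟨u, hub, rfl⟩)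
            have hu : u = w := hforce u hub (by rw [hue]; exact he')
            rw [hu]

/-- Forcing in the first factor lifts to a column copy of the product. -/
lemma copy_fst (hd : 3 ≤ d) (H : HGraph V) (H' : HGraph V') (v' : V')
    {C D : Set V} (h : Relation.ReflTransGen (ZFStep H d) C D) :
    ∀ X : Set (V × V'), (fun x => (x, v')) '' C ⊆ X →
      Relation.ReflTransGen (ZFStep (cartProd H H') d) X
        (X ∪ (fun x => (x, v')) '' D) := by
  induction h with
  | refl =>
      intro X hX
      rw [Set.union_eq_self_of_subset_right hX]
  | @tail b c hCb hstep ih =>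
      intro X hX
      refine ReflTransGen.trans (ih X hX) ?_
      obtain ⟨S, w, hScard, hwS, hwB, hedge, hforce, rfl⟩ := hstep
      set Y := X ∪ (fun x => (x, v')) '' b with hY
      by_cases hw : (w, v') ∈ Y
      · have : X ∪ (fun x => (x, v')) '' insert w b = Y := by
          rw [Set.image_insert_eq]
          rw [hY] at hw ⊢
          rw [Set.union_insert] at *
          exact Set.insert_eq_self.2 hw
        rw [this]
      · have hinj : Function.Injective (fun x : V => (x, v')) := by
          intro a b hab; simpa using hab
        have hrw : X ∪ (fun x => (x, v')) '' insert w b = insert (w, v') Y := by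
          rw [Set.image_insert_eq, hY, Set.union_insert]
        rw [hrw]
        refine ReflTransGen.single ?_
        refine ⟨S.image (fun s => (s, v')), (w, v'), ?_, ?_, hw, ?_, ?_, rfl⟩
        · rw [Finset.card_image_of_injective _ hinj, hScard]
        · simp [hwS]
        · refine Or.inl ⟨insert w S, hedge, v', ?_⟩
          ext ⟨a, x⟩
          simp [Finset.mem_product, eq_comm, or_and_right]
        · rintro ⟨u, a⟩ huY hedge'
          have hS2 : 2 ≤ S.card := by omega
          obtain ⟨s₁, hs₁, s₂, hs₂, hss⟩ := Finset.one_lt_card.mp hS2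
          rcases hedge' with ⟨e, he, w', hee⟩ | ⟨x, e', he', hee⟩
          · have hw' : w' = v' := by
              have h₁ : (s₁, v') ∈ e ×ˢ ({w'} : Finset V') := by
                rw [← hee]; exact Finset.mem_insert_of_mem (Finset.mem_image_of_mem _ hs₁)
              have h2 := (Finset.mem_product.mp h₁).2
              simp only [Finset.mem_singleton] at h2
              exact h2.symm
            rw [hw'] at hee
            have hav : a = v' := by
              have : (u, a) ∈ e ×ˢ ({v'} : Finset V') := by
                rw [← hee]; exact Finset.mem_insert_self _ _
              simpa using (Finset.mem_product.mp this).2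
            rw [hav] at hee huY ⊢
            have hue : insert u S = e := by
              apply Finset.image_injective hinj
              rw [Finset.image_insert, hee, Finset.product_singleton]
              exact (Finset.map_eq_image _ _)
            have hub : u ∉ b := fun hub => huY (Or.inr ⟨u, hub, rfl⟩)
            have hu : u = w := hforce u hub (by rw [hue]; exact he)
            rw [hu]
          · exfalso
            have h₁ : (s₁, v') ∈ ({x} : Finset V) ×ˢ e' := by
              rw [← hee]; exact Finset.mem_insert_of_mem (Finset.mem_image_of_mem _ hs₁)
            have h₂ : (s₂, v') ∈ ({x} : Finset V) ×ˢ e' := by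
              rw [← hee]; exact Finset.mem_insert_of_mem (Finset.mem_image_of_mem _ hs₂)
            simp only [Finset.mem_product, Finset.mem_singleton] at h₁ h₂
            exact hss (h₁.1.trans h₂.1.symm)

end Aux

theorem stmt18 {V V' : Type*} [DecidableEq V] [Fintype V] [DecidableEq V'] [Fintype V']
    {d : ℕ} (hd : 3 ≤ d) (H : HGraph V) (H' : HGraph V')
    (hH : H.IsUniform d) (hH' : H'.IsUniform d) :
    Z0 (cartProd H H') d ≤ Z0 H d * Z0 H' d := by
  obtain ⟨B, hBcard, hBzf⟩ := Nat.sInf_mem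
    (⟨Finset.univ.card, Finset.univ, rfl, by
        show Relation.ReflTransGen _ _ _
        rw [Finset.coe_univ]⟩ :
      {k | ∃ B : Finset V, B.card = k ∧ IsZFSet H d (↑B : Set V)}.Nonempty)
  obtain ⟨B', hB'card, hB'zf⟩ := Nat.sInf_mem
    (⟨Finset.univ.card, Finset.univ, rfl, by
        show Relation.ReflTransGen _ _ _
        rw [Finset.coe_univ]⟩ :
      {k | ∃ C : Finset V', C.card = k ∧ IsZFSet H' d (↑C : Set V')}.Nonempty)
  have phase1 : ∀ T : Finset V, T ⊆ B →
      Relation.ReflTransGen (ZFStep (cartProd H H') d) (↑(B ×ˢ B'))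
        ((↑(B ×ˢ B') : Set (V × V')) ∪ (↑T : Set V) ×ˢ (Set.univ : Set V')) := by
    intro T
    induction T using Finset.induction_on with
    | empty => intro _; simpa using Relation.ReflTransGen.refl
    | @insert v T hvT ih =>
      intro hsub
      have hvB : v ∈ B := hsub (Finset.mem_insert_self _ _)
      refine Relation.ReflTransGen.trans
        (ih (fun x hx => hsub (Finset.mem_insert_of_mem hx))) ?_
      have hsubX : (fun x => (v, x)) '' (↑B' : Set V') ⊆
          (↑(B ×ˢ B') : Set (V × V')) ∪ (↑T : Set V) ×ˢ (Set.univ : Set V') := by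
        rintro p ⟨x, hx, rfl⟩
        exact Or.inl (by simp only [Finset.coe_product, Set.mem_prod]; exact ⟨hvB, hx⟩)
      have hcp := copy_snd hd H H' v hB'zf
        ((↑(B ×ˢ B') : Set (V × V')) ∪ (↑T : Set V) ×ˢ (Set.univ : Set V')) hsubX
      have heq : (↑(B ×ˢ B') : Set (V × V')) ∪ (↑T : Set V) ×ˢ (Set.univ : Set V')
          ∪ (fun x => (v, x)) '' Set.univ
          = (↑(B ×ˢ B') : Set (V × V')) ∪ (↑(insert v T) : Set V) ×ˢ (Set.univ : Set V') := by
        ext ⟨a, y⟩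
        simp only [Set.mem_union, Set.mem_prod, Set.mem_image, Set.mem_univ, and_true,
          Finset.coe_insert, Set.mem_insert_iff, Finset.coe_product, Finset.mem_coe,
          Prod.mk.injEq, exists_eq_right_right, true_and, exists_and_left]
        tauto
      rw [heq] at hcp
      exact hcp
  have phase2 : ∀ T : Finset V',
      Relation.ReflTransGen (ZFStep (cartProd H H') d)
        ((↑B : Set V) ×ˢ (Set.univ : Set V'))
        ((↑B : Set V) ×ˢ (Set.univ : Set V') ∪ (Set.univ : Set V) ×ˢ (↑T : Set V')) := by
    intro T
    induction T using Finset.induction_on with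
    | empty => simpa using Relation.ReflTransGen.refl
    | @insert v' T hvT ih =>
      refine Relation.ReflTransGen.trans ih ?_
      have hsubX : (fun x => (x, v')) '' (↑B : Set V) ⊆
          (↑B : Set V) ×ˢ (Set.univ : Set V') ∪ (Set.univ : Set V) ×ˢ (↑T : Set V') := by
        rintro p ⟨x, hx, rfl⟩
        exact Or.inl ⟨hx, Set.mem_univ _⟩
      have hcp := copy_fst hd H H' v' hBzf
        ((↑B : Set V) ×ˢ (Set.univ : Set V') ∪ (Set.univ : Set V) ×ˢ (↑T : Set V')) hsubX
      have heq : (↑B : Set V) ×ˢ (Set.univ : Set V') ∪ (Set.univ : Set V) ×ˢ (↑T : Set V')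
          ∪ (fun x => (x, v')) '' Set.univ
          = (↑B : Set V) ×ˢ (Set.univ : Set V')
            ∪ (Set.univ : Set V) ×ˢ (↑(insert v' T) : Set V') := by
        ext ⟨a, y⟩
        simp only [Set.mem_union, Set.mem_prod, Set.mem_image, Set.mem_univ, and_true, true_and,
          Finset.coe_insert, Set.mem_insert_iff, Finset.mem_coe, Prod.mk.injEq,
          exists_eq_left]
        tauto
      rw [heq] at hcp
      exact hcp
  have key : IsZFSet (cartProd H H') d (↑(B ×ˢ B') : Set (V × V')) := by
    have step1 := phase1 B subset_rfl
    have e1 : (↑(B ×ˢ B') : Set (V × V')) ∪ (↑B : Set V) ×ˢ (Set.univ : Set V')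
        = (↑B : Set V) ×ˢ (Set.univ : Set V') := by
      apply Set.union_eq_self_of_subset_left
      rw [Finset.coe_product]
      exact Set.prod_mono subset_rfl (Set.subset_univ _)
    rw [e1] at step1
    have step2 := phase2 Finset.univ
    have e2 : (↑B : Set V) ×ˢ (Set.univ : Set V')
        ∪ (Set.univ : Set V) ×ˢ (↑(Finset.univ : Finset V') : Set V')
        = (Set.univ : Set (V × V')) := by
      rw [Finset.coe_univ, Set.univ_prod_univ]
      exact Set.union_univ _
    rw [e2] at step2
    exact step1.trans step2
  calc Z0 (cartProd H H') d ≤ (B ×ˢ B').card := Nat.sInf_le ⟨B ×ˢ B', rfl, key⟩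
    _ = Z0 H d * Z0 H' d := by rw [Finset.card_product, hBcard, hB'card]; rfl
end
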